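/- arXiv:2505.12855 — 4 statements merged into one kernel-verified Lean document; each statement's English description precedes it below -/
import Mathlib

section
/- Let D be a division ring with center F, and let K be a subfield of D containing F. If dim_F D = m², then dim_F K ≤ m. Moreover, dim_F K = m if and only if K is a maximal subfield of D. -/
/-- A subfield (in the sense of Mathlib: a division subring) `K` of a division ring `D`
is a maximal subfield if it is commutative and is not properly contained in any
commutative subfield of `D`. -/
def IsMaximalSubfield {D : Type*} [DivisionRing D] (K : Subfield D) : Prop :=
  (∀ x ∈ K, ∀ y ∈ K, x * y = y * x) ∧
    ∀ L : Subfield D, (∀ x ∈ L, ∀ y ∈ L, x * y = y * x) → K ≤ L → K = L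

/-- A subfield of `D` containing (the image of) `F`, viewed as an `F`-submodule of `D`. -/
def Subfield.toSubmoduleOver {F D : Type*} [Field F] [DivisionRing D] [Algebra F D]
    (K : Subfield D) (hFK : Set.range (algebraMap F D) ⊆ K) : Submodule F D where
  carrier := K
  add_mem' hx hy := K.add_mem hx hy
  zero_mem' := K.zero_mem
  smul_mem' a x hx := by
    rw [Algebra.smul_def]
    exact K.mul_mem (hFK ⟨a, rfl⟩) hx


open Module

section Aux
variable {F D : Type*} [Field F] [DivisionRing D] [Algebra F D]

/-- Key independence lemma: if `k i` are `F`-linearly independent and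
`∑ d i * x * k i = 0` for all `x`, then all `d i = 0` (uses that `F` is the center). -/
theorem lemA (hcenter : Set.range (algebraMap F D) = Set.center D)
    {ι : Type*} {k : ι → D} (hk : LinearIndependent F k) :
    ∀ s : Finset ι, ∀ d : ι → D, (∀ x : D, ∑ i ∈ s, d i * x * k i = 0) →
      ∀ i ∈ s, d i = 0 := by
  classical
  intro s
  induction s using Finset.strongInduction with
  | _ s ih =>
    intro d hd
    by_contra hcon
    push_neg at hcon
    obtain ⟨j, hjs, hj⟩ := hcon
    set d' : ι → D := fun i => (d j)⁻¹ * d i with hd'def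
    have hd'j : d' j = 1 := inv_mul_cancel₀ hj
    have hsum : ∀ x : D, ∑ i ∈ s, d' i * x * k i = 0 := by
      intro x
      have : (d j)⁻¹ * ∑ i ∈ s, d i * x * k i = 0 := by rw [hd x, mul_zero]
      rw [Finset.mul_sum] at this
      simpa [hd'def, mul_assoc] using this
    have hcomm : ∀ i ∈ s, ∀ y : D, d' i * y = y * d' i := by
      intro i his y
      rcases eq_or_ne i j with rfl | hij
      · rw [hd'j, one_mul, mul_one]
      · have key : ∀ x : D, ∑ i' ∈ s.erase j, (d' i' * y - y * d' i') * x * k i' = 0 := by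
          intro x
          have h1 : ∑ i' ∈ s, (d' i' * y - y * d' i') * x * k i' = 0 := by
            have e1 : ∑ i' ∈ s, d' i' * (y * x) * k i' = 0 := hsum (y * x)
            have e2 : y * ∑ i' ∈ s, d' i' * x * k i' = 0 := by rw [hsum x, mul_zero]
            rw [Finset.mul_sum] at e2
            calc ∑ i' ∈ s, (d' i' * y - y * d' i') * x * k i'
                = ∑ i' ∈ s, (d' i' * (y * x) * k i' - y * (d' i' * x * k i')) := by
                  refine Finset.sum_congr rfl fun i' _ => ?_
                  simp only [sub_mul, mul_assoc]
              _ = 0 := by rw [Finset.sum_sub_distrib, e1, e2, sub_zero]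
          have : ∑ i' ∈ s.erase j, (d' i' * y - y * d' i') * x * k i'
              = ∑ i' ∈ s, (d' i' * y - y * d' i') * x * k i' := by
            rw [← Finset.sum_erase_add s _ hjs]
            rw [hd'j]
            simp
          rw [this, h1]
        have := ih (s.erase j) (Finset.erase_ssubset hjs) _ key i
          (Finset.mem_erase.mpr ⟨hij, his⟩)
        have := sub_eq_zero.mp this
        exact this
    have hcentral : ∀ i ∈ s, ∃ a : F, algebraMap F D a = d' i := by
      intro i his
      have : d' i ∈ Set.center D := by
        rw [Set.mem_center_iff]
        exact ⟨fun y => hcomm i his y, fun _ _ => (mul_assoc _ _ _).symm,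
          fun _ _ => mul_assoc _ _ _⟩
      rw [← hcenter] at this
      exact this
    choose! c hc using hcentral
    have h1 : ∑ i ∈ s, c i • k i = 0 := by
      have := hsum 1
      simp only [mul_one] at this
      calc ∑ i ∈ s, c i • k i = ∑ i ∈ s, d' i * k i := by
            refine Finset.sum_congr rfl fun i hi => ?_
            rw [Algebra.smul_def, hc i hi]
        _ = 0 := by simpa [mul_one] using hsum 1
    have hcj := linearIndependent_iff'.mp hk s c h1 j hjs
    have : (1 : D) = 0 := by
      rw [← hd'j, ← hc j hjs, hcj, map_zero]
    exact one_ne_zero this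

/-- The double centralizer of a commuting set, as a subfield. -/
def doubleCentralizer (S : Set D) : Subfield D where
  carrier := Set.centralizer (Set.centralizer S)
  zero_mem' := fun z _ => by rw [zero_mul, mul_zero]
  one_mem' := fun z _ => by rw [one_mul, mul_one]
  add_mem' := fun {a b} ha hb z hz => by
    rw [add_mul, mul_add, ha z hz, hb z hz]
  neg_mem' := fun {a} ha z hz => by rw [neg_mul, mul_neg, ha z hz]
  mul_mem' := fun {a b} ha hb z hz => by
    rw [← mul_assoc, ha z hz, mul_assoc, hb z hz, mul_assoc]
  inv_mem' := fun a ha z hz => by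
    have : Commute z a := ha z hz
    exact this.inv_right₀

theorem mem_doubleCentralizer {S : Set D} {x : D} :
    x ∈ doubleCentralizer S ↔ ∀ z ∈ Set.centralizer S, z * x = x * z := Iff.rfl

/-- A maximal subfield contains its own centralizer. -/
theorem centralizer_le_of_maximal {K : Subfield D} (hmax : IsMaximalSubfield K)
    (c : D) (hc : ∀ k ∈ K, c * k = k * c) : c ∈ K := by
  set S : Set D := ↑K ∪ {c} with hS
  have hScomm : ∀ a ∈ S, ∀ b ∈ S, a * b = b * a := by
    rintro a (ha | ha) b (hb | hb)
    · exact hmax.1 a ha b hb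
    · rw [Set.mem_singleton_iff] at hb; subst hb; exact (hc a ha).symm
    · rw [Set.mem_singleton_iff] at ha; subst ha; exact hc b hb
    · rw [Set.mem_singleton_iff] at ha hb; subst ha; subst hb; rfl
  have hSsub : S ⊆ Set.centralizer S := fun a ha b hb => hScomm b hb a ha
  set L : Subfield D := doubleCentralizer S with hL
  have hSL : S ⊆ ↑L := fun a ha z hz => (hz a ha).symm
  have hLcomm : ∀ x ∈ L, ∀ y ∈ L, x * y = y * x := by
    intro x hx y hy
    have hy' : y ∈ Set.centralizer S := Set.centralizer_subset hSsub hy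
    exact (hx y hy').symm
  have hKL : K ≤ L := fun k hk => hSL (Or.inl hk)
  have := hmax.2 L hLcomm hKL
  rw [this]
  exact hSL (Or.inr rfl)

end Aux

section Synonym
variable (D : Type*)

/-- Type synonym for `D` seen as a right module over a subfield. -/
def Dm : Type _ := D

variable {D}
/-- Identity map into the synonym. -/
def Dm.mk : D → Dm D := id
/-- Identity map out of the synonym. -/
def Dm.un : Dm D → D := id

@[simp] theorem Dm.un_mk (x : D) : Dm.un (Dm.mk x : Dm D) = x := rfl
@[simp] theorem Dm.mk_un (x : Dm D) : Dm.mk (Dm.un x) = x := rfl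

variable (D)
instance [DivisionRing D] : AddCommGroup (Dm D) := inferInstanceAs (AddCommGroup D)
instance [DivisionRing D] : Module D (Dm D) := inferInstanceAs (Module D D)
instance [DivisionRing D] : Nontrivial (Dm D) := inferInstanceAs (Nontrivial D)

section
variable (F : Type*) [Field F] [DivisionRing D] [Algebra F D]
instance : Module F (Dm D) := inferInstanceAs (Module F D)
instance : IsScalarTower F D (Dm D) := inferInstanceAs (IsScalarTower F D D)
instance [FiniteDimensional F D] : FiniteDimensional F (Dm D) :=
  inferInstanceAs (Module.Finite F D)
end

variable {D}
@[simp] theorem Dm.un_add (x y : Dm D) [DivisionRing D] :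
    Dm.un (x + y) = Dm.un x + Dm.un y := rfl
@[simp] theorem Dm.un_zero [DivisionRing D] : Dm.un (0 : Dm D) = 0 := rfl
theorem Dm.dsmul_def [DivisionRing D] (d : D) (x : Dm D) : d • x = Dm.mk (d * Dm.un x) := rfl

/-- The additive equivalence between `Dm D` and `D`. -/
def Dm.addEquiv [DivisionRing D] : Dm D ≃+ D where
  toFun := Dm.un
  invFun := Dm.mk
  left_inv _ := rfl
  right_inv _ := rfl
  map_add' _ _ := rfl
theorem Dm.fsmul_def (F : Type*) [Field F] [DivisionRing D] [Algebra F D] (a : F) (x : Dm D) :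
    a • x = Dm.mk (algebraMap F D a * Dm.un x) := Algebra.smul_def a (Dm.un x)

/-- Type synonym for a subfield, to carry a right action on `Dm D`. -/
def Kr [DivisionRing D] (K : Subfield D) : Type _ := ↥K

namespace Kr
variable [DivisionRing D] {K : Subfield D}

/-- Identity map into the synonym. -/
def mk : ↥K → Kr K := id
/-- Identity map out of the synonym. -/
def un : Kr K → ↥K := id
/-- Value in `D`. -/
def val (k : Kr K) : D := ((Kr.un k : ↥K) : D)

instance : DivisionRing (Kr K) := inferInstanceAs (DivisionRing ↥K)

theorem val_injective : Function.Injective (val : Kr K → D) := fun a b h => congrArg Kr.mk (Subtype.ext h)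
@[simp] theorem val_mk (k : ↥K) : (mk k).val = (k : D) := rfl
@[simp] theorem val_one : (1 : Kr K).val = 1 := rfl
@[simp] theorem val_zero : (0 : Kr K).val = 0 := rfl
@[simp] theorem val_mul (a b : Kr K) : (a * b).val = a.val * b.val := rfl
@[simp] theorem val_add (a b : Kr K) : (a + b).val = a.val + b.val := rfl
theorem val_mem (k : Kr K) : k.val ∈ K := (k : ↥K).2

/-- The inclusion ring hom. -/
def mkHom : ↥K →+* Kr K where
  toFun := mk
  map_one' := rfl
  map_mul' _ _ := rfl
  map_zero' := rfl
  map_add' _ _ := rfl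

/-- Field structure from commutativity. -/
@[reducible] def field (hKcomm : ∀ x ∈ K, ∀ y ∈ K, x * y = y * x) : Field (Kr K) :=
  { (inferInstance : DivisionRing (Kr K)) with
    mul_comm := fun a b => val_injective (hKcomm _ (val_mem a) _ (val_mem b)) }

end Kr
end Synonym

section Core
variable {F D : Type*} [Field F] [DivisionRing D] [Algebra F D]

set_option maxHeartbeats 2000000 in
theorem core (hcenter : Set.range (algebraMap F D) = Set.center D)
    [FiniteDimensional F D]
    (K : Subfield D) (hKcomm : ∀ x ∈ K, ∀ y ∈ K, x * y = y * x)
    (hFK : Set.range (algebraMap F D) ⊆ K) :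
    Module.finrank F (K.toSubmoduleOver hFK) * Module.finrank F (K.toSubmoduleOver hFK)
      ≤ Module.finrank F D ∧
    ((∀ c : D, (∀ k ∈ K, c * k = k * c) → c ∈ K) →
      Module.finrank F (K.toSubmoduleOver hFK) * Module.finrank F (K.toSubmoduleOver hFK)
        = Module.finrank F D) := by
  classical
  have hcen : ∀ (a : F) (x : D), algebraMap F D a * x = x * algebraMap F D a := by
    intro a x
    have h : algebraMap F D a ∈ Set.center D := hcenter ▸ ⟨a, rfl⟩
    exact ((Set.mem_center_iff.mp h).comm x)
  have hKc : ∀ (a b : Kr K), a.val * b.val = b.val * a.val :=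
    fun a b => hKcomm _ (Kr.val_mem a) _ (Kr.val_mem b)
  -- Field structure on K
  letI fK : Field (Kr K) := Kr.field hKcomm
  letI aFK : Algebra F (Kr K) :=
    RingHom.toAlgebra (Kr.mkHom.comp ((algebraMap F D).codRestrict K fun a => hFK ⟨a, rfl⟩))
  have coe_alg : ∀ a : F, (algebraMap F (Kr K) a).val = algebraMap F D a := fun _ => rfl
  have coe_fsmul : ∀ (a : F) (k : Kr K), (a • k).val = algebraMap F D a * k.val := by
    intro a k
    rw [Algebra.smul_def, Kr.val_mul, coe_alg]
  -- right K-module structure on Dm D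
  letI mK : Module (Kr K) (Dm D) :=
    { smul := fun k x => Dm.mk (Dm.un x * k.val)
      one_smul := fun x => by show Dm.mk (Dm.un x * (1 : Kr K).val) = x; simp
      mul_smul := fun k k' x => by
        show Dm.mk (Dm.un x * (k * k').val)
          = Dm.mk (Dm.un (Dm.mk (Dm.un x * k'.val)) * k.val)
        rw [Kr.val_mul, Dm.un_mk, mul_assoc, hKc k k']
      smul_zero := fun k => by show Dm.mk (Dm.un (0 : Dm D) * k.val) = 0; simp; rfl
      smul_add := fun k x y => by
        show Dm.mk (Dm.un (x + y) * k.val) = Dm.mk (Dm.un x * k.val) + Dm.mk (Dm.un y * k.val)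
        rw [Dm.un_add, add_mul]; rfl
      add_smul := fun k k' x => by
        show Dm.mk (Dm.un x * (k + k').val) = Dm.mk (Dm.un x * k.val) + Dm.mk (Dm.un x * k'.val)
        rw [Kr.val_add, mul_add]; rfl
      zero_smul := fun x => by show Dm.mk (Dm.un x * (0 : Kr K).val) = 0; simp; rfl }
  have ksmul : ∀ (k : Kr K) (x : Dm D), k • x = Dm.mk (Dm.un x * k.val) := fun _ _ => rfl
  letI : IsScalarTower F (Kr K) (Dm D) := by
    constructor
    intro a k x
    rw [ksmul (a • k) x, ksmul k x, coe_fsmul a k,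
      Dm.fsmul_def F a (Dm.mk (Dm.un x * k.val)), Dm.un_mk, ← mul_assoc, ← hcen, mul_assoc]
  letI : SMulCommClass (Kr K) F (Dm D) := by
    constructor
    intro k a x
    rw [Dm.fsmul_def F a x, ksmul k (Dm.mk (algebraMap F D a * Dm.un x)), ksmul k x,
      Dm.fsmul_def F a (Dm.mk (Dm.un x * k.val)), Dm.un_mk, Dm.un_mk, mul_assoc]
  letI : SMulCommClass (Kr K) (Kr K) (Dm D) := by
    constructor
    intro k k' x
    rw [ksmul k' x, ksmul k (Dm.mk (Dm.un x * k'.val)), ksmul k x,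
      ksmul k' (Dm.mk (Dm.un x * k.val)), Dm.un_mk, Dm.un_mk, mul_assoc, mul_assoc, hKc k' k]
  letI : SMulCommClass D (Kr K) (Dm D) := by
    constructor
    intro d k x
    rw [ksmul k x, Dm.dsmul_def d (Dm.mk (Dm.un x * k.val)), Dm.dsmul_def d x,
      ksmul k (Dm.mk (d * Dm.un x)), Dm.un_mk, Dm.un_mk, mul_assoc]
  -- finite dimensionality of K over F
  have eK : Kr K ≃ₗ[F] (K.toSubmoduleOver hFK) :=
    { toFun := fun k => ⟨k.val, Kr.val_mem k⟩
      invFun := fun x => Kr.mk ⟨x.1, x.2⟩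
      map_add' := fun _ _ => rfl
      map_smul' := fun a k => by
        apply Subtype.ext
        show (a • k).val = a • k.val
        rw [coe_fsmul, Algebra.smul_def]
      left_inv := fun _ => rfl
      right_inv := fun _ => rfl }
  letI : FiniteDimensional F (Kr K) := Module.Finite.equiv eK.symm
  have hn : Module.finrank F (K.toSubmoduleOver hFK) = Module.finrank F (Kr K) :=
    eK.finrank_eq.symm
  letI : FiniteDimensional (Kr K) (Dm D) := FiniteDimensional.right F (Kr K) (Dm D)
  -- second commutation class, to get the D-module structure on endomorphisms
  letI : SMulCommClass (Kr K) D (Dm D) := by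
    constructor
    intro k d x
    rw [Dm.dsmul_def d x, ksmul k (Dm.mk (d * Dm.un x)), ksmul k x,
      Dm.dsmul_def d (Dm.mk (Dm.un x * k.val)), Dm.un_mk, Dm.un_mk, mul_assoc]
  have dEsmul : ∀ (d : D) (f : Dm D →ₗ[Kr K] Dm D) (x : Dm D),
      (d • f) x = Dm.mk (d * Dm.un (f x)) := fun _ _ _ => rfl
  have fEsmul : ∀ (a : F) (f : Dm D →ₗ[Kr K] Dm D) (x : Dm D),
      (a • f) x = Dm.mk (algebraMap F D a * Dm.un (f x)) := fun a f x => Dm.fsmul_def F a (f x)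
  letI : FiniteDimensional (Kr K) (Dm D →ₗ[Kr K] Dm D) :=
    Module.Finite.linearMap (Kr K) (Kr K) (Dm D) (Dm D)
  letI : FiniteDimensional F (Dm D →ₗ[Kr K] Dm D) := Module.Finite.trans (Kr K) _
  letI : IsScalarTower F D (Dm D →ₗ[Kr K] Dm D) := by
    constructor
    intro a d f
    refine LinearMap.ext fun x => ?_
    rw [dEsmul (a • d) f x, fEsmul a (d • f) x, dEsmul d f x, Dm.un_mk,
      Algebra.smul_def a d, mul_assoc]
  letI : IsScalarTower F (Kr K) (Dm D →ₗ[Kr K] Dm D) := by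
    constructor
    intro a k f
    refine LinearMap.ext fun x => ?_
    rw [LinearMap.smul_apply, LinearMap.smul_apply, LinearMap.smul_apply,
      ksmul (a • k) (f x), ksmul k (f x), coe_fsmul a k,
      Dm.fsmul_def F a (Dm.mk (Dm.un (f x) * k.val)), Dm.un_mk, ← mul_assoc, ← hcen, mul_assoc]
  letI : FiniteDimensional D (Dm D →ₗ[Kr K] Dm D) := FiniteDimensional.right F D _
  -- dimension bookkeeping
  have hm2 : Module.finrank F (Dm D) = Module.finrank F D := rfl
  have e1 : Module.finrank F (Kr K) * Module.finrank (Kr K) (Dm D) = Module.finrank F D := by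
    rw [← hm2]; exact Module.finrank_mul_finrank F (Kr K) (Dm D)
  have e2 : Module.finrank (Kr K) (Dm D →ₗ[Kr K] Dm D)
      = Module.finrank (Kr K) (Dm D) * Module.finrank (Kr K) (Dm D) :=
    Module.finrank_linearMap (Kr K) (Kr K) (Dm D) (Dm D)
  have e3 : Module.finrank F (Kr K)
        * (Module.finrank (Kr K) (Dm D) * Module.finrank (Kr K) (Dm D))
      = Module.finrank F (Dm D →ₗ[Kr K] Dm D) := by
    rw [← e2]; exact Module.finrank_mul_finrank F (Kr K) (Dm D →ₗ[Kr K] Dm D)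
  have e4 : Module.finrank F D * Module.finrank D (Dm D →ₗ[Kr K] Dm D)
      = Module.finrank F (Dm D →ₗ[Kr K] Dm D) :=
    Module.finrank_mul_finrank F D (Dm D →ₗ[Kr K] Dm D)
  -- the right-multiplication operators
  let ρ : Kr K →ₗ[F] (Dm D →ₗ[Kr K] Dm D) :=
    { toFun := fun k =>
        { toFun := fun x => Dm.mk (Dm.un x * k.val)
          map_add' := fun x y => by
            show Dm.mk (Dm.un (x + y) * k.val)
              = Dm.mk (Dm.un x * k.val) + Dm.mk (Dm.un y * k.val)
            rw [Dm.un_add, add_mul]; rfl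
          map_smul' := fun k' x => by
            show Dm.mk (Dm.un (k' • x) * k.val) = k' • Dm.mk (Dm.un x * k.val)
            rw [ksmul k' x, ksmul k' (Dm.mk (Dm.un x * k.val)),
              Dm.un_mk, Dm.un_mk, mul_assoc, mul_assoc, hKc k k'] }
      map_add' := fun k k' => LinearMap.ext fun x => by
        rw [LinearMap.add_apply]
        show Dm.mk (Dm.un x * (k + k').val)
          = Dm.mk (Dm.un x * k.val) + Dm.mk (Dm.un x * k'.val)
        rw [Kr.val_add, mul_add]; rfl
      map_smul' := fun a k => LinearMap.ext fun x => by
        rw [RingHom.id_apply, LinearMap.smul_apply]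
        show Dm.mk (Dm.un x * (a • k).val) = a • Dm.mk (Dm.un x * k.val)
        rw [coe_fsmul a k, Dm.fsmul_def F a (Dm.mk (Dm.un x * k.val)), Dm.un_mk,
          ← mul_assoc, ← hcen, mul_assoc] }
  have ρ_apply : ∀ (k : Kr K) (x : Dm D), ρ k x = Dm.mk (Dm.un x * k.val) := fun _ _ => rfl
  -- independence over D of right multiplications by a basis of K
  let bK := Module.finBasis F (Kr K)
  have hkind : LinearIndependent F (fun i => (bK i).val) := by
    have hv : LinearIndependent F bK := bK.linearIndependent
    let vl : Kr K →ₗ[F] D :=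
      { toFun := Kr.val
        map_add' := Kr.val_add
        map_smul' := fun a k => by
          show Kr.val (a • k) = a • Kr.val k
          rw [coe_fsmul a k, Algebra.smul_def] }
    exact hv.map' vl (LinearMap.ker_eq_bot.mpr Kr.val_injective)
  have hind : LinearIndependent D (fun i => ρ (bK i)) := by
    rw [linearIndependent_iff']
    intro s g hsum i hi
    refine lemA hcenter hkind s g (fun x => ?_) i hi
    have hx : (∑ i ∈ s, g i • ρ (bK i)) (Dm.mk x) = 0 := by rw [hsum]; rfl
    rw [LinearMap.sum_apply] at hx
    have hterm : ∀ i ∈ s, (g i • ρ (bK i)) (Dm.mk x) = Dm.mk (g i * x * (bK i).val) := by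
      intro i _
      rw [dEsmul (g i) (ρ (bK i)) (Dm.mk x), ρ_apply (bK i) (Dm.mk x), Dm.un_mk, Dm.un_mk,
        mul_assoc]
    calc ∑ i ∈ s, g i * x * (bK i).val
        = ∑ i ∈ s, Dm.un ((g i • ρ (bK i)) (Dm.mk x)) :=
          Finset.sum_congr rfl fun i hi' => by rw [hterm i hi', Dm.un_mk]
      _ = Dm.un (∑ i ∈ s, (g i • ρ (bK i)) (Dm.mk x)) :=
          (map_sum (Dm.addEquiv : Dm D ≃+ D) _ s).symm
      _ = 0 := by rw [hx]; rfl
  have hnr : Module.finrank F (Kr K) ≤ Module.finrank D (Dm D →ₗ[Kr K] Dm D) := by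
    have := hind.fintype_card_le_finrank
    simpa using this
  have hm0 : 0 < Module.finrank F D := Module.finrank_pos
  have hrq : Module.finrank D (Dm D →ₗ[Kr K] Dm D) = Module.finrank (Kr K) (Dm D) := by
    apply Nat.eq_of_mul_eq_mul_left hm0
    rw [e4, ← e3, ← e1, mul_assoc]
  have hnq : Module.finrank F (Kr K) ≤ Module.finrank (Kr K) (Dm D) := hrq ▸ hnr
  constructor
  · rw [hn]
    calc Module.finrank F (Kr K) * Module.finrank F (Kr K)
        ≤ Module.finrank F (Kr K) * Module.finrank (Kr K) (Dm D) :=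
          Nat.mul_le_mul_left _ hnq
      _ = Module.finrank F D := e1
  · intro hcsub
    rw [hn]
    -- the tensor algebra action
    letI mR : Module (TensorProduct F D (Kr K)) (Dm D) := TensorProduct.Algebra.module
    have tsmul : ∀ (d : D) (k : Kr K) (x : Dm D),
        (d ⊗ₜ[F] k) • x = Dm.mk (d * (Dm.un x * k.val)) := by
      intro d k x
      rw [TensorProduct.Algebra.smul_def d k x, ksmul k x,
        Dm.dsmul_def d (Dm.mk (Dm.un x * k.val)), Dm.un_mk]
    -- D is a simple module over the tensor product
    have hsimple : ∀ N' : Submodule (TensorProduct F D (Kr K)) (Dm D), N' = ⊥ ∨ N' = ⊤ := by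
      intro N'
      rcases eq_or_ne N' ⊥ with h | h
      · exact Or.inl h
      · refine Or.inr ?_
        rw [Submodule.ne_bot_iff] at h
        obtain ⟨x, hxN, hx0⟩ := h
        have hx0' : Dm.un x ≠ 0 := fun hh => hx0 (by rw [← Dm.mk_un x, hh]; rfl)
        rw [Submodule.eq_top_iff']
        intro y
        have hsm := N'.smul_mem ((Dm.un y * (Dm.un x)⁻¹) ⊗ₜ[F] (1 : Kr K)) hxN
        rw [tsmul] at hsm
        have heq : Dm.un y * (Dm.un x)⁻¹ * (Dm.un x * (1 : Kr K).val) = Dm.un y := by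
          rw [Kr.val_one, mul_one, mul_assoc, inv_mul_cancel₀ hx0', mul_one]
        rw [heq, Dm.mk_un] at hsm
        exact hsm
    -- classification of tensor-linear endomorphisms: right multiplication by K
    have gform : ∀ g : Dm D →ₗ[TensorProduct F D (Kr K)] Dm D, ∃ c : Kr K,
        ∀ x : Dm D, g x = Dm.mk (Dm.un x * c.val) := by
      intro g
      set c0 : D := Dm.un (g (Dm.mk 1)) with hc0def
      have hgx : ∀ x : Dm D, g x = Dm.mk (Dm.un x * c0) := by
        intro x
        have h1 : (Dm.un x ⊗ₜ[F] (1 : Kr K)) • (Dm.mk 1 : Dm D) = x := by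
          rw [tsmul, Dm.un_mk, Kr.val_one, mul_one, mul_one, Dm.mk_un]
        calc g x = g ((Dm.un x ⊗ₜ[F] (1 : Kr K)) • (Dm.mk 1 : Dm D)) := by rw [h1]
          _ = (Dm.un x ⊗ₜ[F] (1 : Kr K)) • g (Dm.mk 1) := map_smul g _ _
          _ = Dm.mk (Dm.un x * c0) := by rw [tsmul, Kr.val_one, ← hc0def, mul_one]
      have hc0K : c0 ∈ K := by
        apply hcsub
        intro k hk
        have h2 := map_smul g ((1 : D) ⊗ₜ[F] (Kr.mk ⟨k, hk⟩)) (Dm.mk 1)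
        rw [tsmul, tsmul, Dm.un_mk, Kr.val_mk, one_mul, one_mul, hgx (Dm.mk k), Dm.un_mk,
          ← hc0def, one_mul] at h2
        exact h2.symm
      refine ⟨Kr.mk ⟨c0, hc0K⟩, fun x => ?_⟩
      rw [hgx x, Kr.val_mk]
    -- semisimplicity
    letI : IsSimpleModule (TensorProduct F D (Kr K)) (Dm D) := by
      letI : Nontrivial (Submodule (TensorProduct F D (Kr K)) (Dm D)) := by
        refine ⟨⊥, ⊤, fun h => ?_⟩
        have h1 : (Dm.mk 1 : Dm D) ∈ (⊥ : Submodule (TensorProduct F D (Kr K)) (Dm D)) :=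
          h ▸ Submodule.mem_top
        have h2 := (Submodule.mem_bot _).mp h1
        exact one_ne_zero (α := D) h2
      exact { eq_bot_or_eq_top := hsimple }
    letI : IsSemisimpleModule (TensorProduct F D (Kr K)) (Dm D) := by
      refine { exists_isCompl := fun N' => ?_ }
      rcases hsimple N' with rfl | rfl
      · exact ⟨⊤, isCompl_bot_top⟩
      · exact ⟨⊥, isCompl_top_bot⟩
    let bD := Module.finBasis (Kr K) (Dm D)
    letI : IsSemisimpleModule (TensorProduct F D (Kr K))
        (Fin (Module.finrank (Kr K) (Dm D)) → Dm D) := by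
      refine isSemisimpleModule_of_isSemisimpleModule_submodule'
        (p := fun i => LinearMap.range
          (LinearMap.single (TensorProduct F D (Kr K)) (fun _ => Dm D) i))
        (fun i => ?_) (LinearMap.iSup_range_single _ _)
      refine IsSemisimpleModule.congr (LinearEquiv.ofInjective _ ?_).symm
      show Function.Injective ⇑(LinearMap.single (TensorProduct F D (Kr K)) (fun _ => Dm D) i)
      rw [LinearMap.coe_single]
      exact Pi.single_injective i
    -- every K-linear endomorphism lies in the D-span of right multiplications
    have hspan : ∀ f : Dm D →ₗ[Kr K] Dm D,
        f ∈ Submodule.span D (Set.range fun i => ρ (bK i)) := by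
      intro f
      set b : Fin (Module.finrank (Kr K) (Dm D)) → Dm D := fun i => bD i with hbdef
      set N := Submodule.span (TensorProduct F D (Kr K)) {b} with hNdef
      obtain ⟨N', hN'⟩ := exists_isCompl N
      set e := N.subtype.comp (N.linearProjOfIsCompl N' hN') with hedef
      have he_mem : ∀ v, e v ∈ N := fun v => (N.linearProjOfIsCompl N' hN' v).2
      have he_id : ∀ v ∈ N, e v = v := by
        intro v hv
        show N.subtype (N.linearProjOfIsCompl N' hN' v) = v
        have : v = ((⟨v, hv⟩ : N) : Fin (Module.finrank (Kr K) (Dm D)) → Dm D) := rfl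
        rw [this]; erw [Submodule.projectionOnto_apply_left hN' ⟨v, hv⟩]
        rfl
      have hcommute : ∀ (g : Dm D →ₗ[TensorProduct F D (Kr K)] Dm D) (x : Dm D),
          f (g x) = g (f x) := by
        intro g x
        obtain ⟨c, hcg⟩ := gform g
        rw [hcg x, hcg (f x)]
        have hms := map_smul f c x
        rw [ksmul c x, ksmul c (f x)] at hms
        exact hms
      have key : ∀ v : Fin (Module.finrank (Kr K) (Dm D)) → Dm D,
          (fun i => f (e v i)) = e (fun i => f (v i)) := by
        intro v
        have hv : ∀ w : Fin (Module.finrank (Kr K) (Dm D)) → Dm D,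
            e w = ∑ j, e (LinearMap.single (TensorProduct F D (Kr K)) (fun _ => Dm D) j (w j)) := by
          intro w
          rw [← map_sum]
          congr 1
          have : ∀ j, LinearMap.single (TensorProduct F D (Kr K)) (fun _ => Dm D) j (w j)
              = Pi.single j (w j) := fun j => rfl
          simp only [this]
          exact (Finset.univ_sum_single w).symm
        funext i
        rw [hv v, hv (fun i => f (v i)), Finset.sum_apply, Finset.sum_apply, map_sum]
        refine Finset.sum_congr rfl fun j _ => ?_
        exact hcommute ((LinearMap.proj i).comp
          (e.comp (LinearMap.single (TensorProduct F D (Kr K)) (fun _ => Dm D) j))) (v j)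
      have hb_mem : b ∈ N := Submodule.mem_span_singleton_self b
      have hfb : (fun i => f (b i)) ∈ N := by
        have h1 := key b
        rw [he_id b hb_mem] at h1
        rw [h1]
        exact he_mem _
      obtain ⟨r0, hr0⟩ := Submodule.mem_span_singleton.mp hfb
      obtain ⟨S, hSdef⟩ := TensorProduct.exists_finset r0
      rw [hSdef] at hr0
      have hcomp : ∀ j, f (b j) = ∑ p ∈ S, Dm.mk (p.1 * (Dm.un (b j) * p.2.val)) := by
        intro j
        have h3 := congrFun hr0 j
        rw [Finset.sum_smul] at h3
        have h4 : (∑ p ∈ S, (p.1 ⊗ₜ[F] p.2) • b) j = ∑ p ∈ S, ((p.1 ⊗ₜ[F] p.2) • b) j :=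
          Finset.sum_apply j S _
        rw [h4] at h3
        rw [← h3]
        refine Finset.sum_congr rfl fun p _ => ?_
        have h5 : ((p.1 ⊗ₜ[F] p.2) • b) j = (p.1 ⊗ₜ[F] p.2) • (b j) := rfl
        rw [h5, tsmul]
      have hfeq : f = ∑ p ∈ S, p.1 • ρ p.2 := by
        refine bD.ext fun j => ?_
        rw [LinearMap.sum_apply]
        have : bD j = b j := rfl
        rw [this, hcomp j]
        refine Finset.sum_congr rfl fun p _ => ?_
        rw [dEsmul p.1 (ρ p.2) (b j), ρ_apply, Dm.un_mk]
      rw [hfeq]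
      refine Submodule.sum_mem _ fun p _ => Submodule.smul_mem _ _ ?_
      have hrepr : p.2 = ∑ i, bK.repr p.2 i • bK i := (bK.sum_repr p.2).symm
      rw [hrepr, map_sum]
      refine Submodule.sum_mem _ fun i _ => ?_
      rw [map_smul, ← algebraMap_smul D (bK.repr p.2 i) (ρ (bK i))]
      exact Submodule.smul_mem _ _ (Submodule.subset_span ⟨i, rfl⟩)
    have htop : Submodule.span D (Set.range fun i => ρ (bK i)) = ⊤ :=
      eq_top_iff.mpr fun f _ => hspan f
    have hqn : Module.finrank (Kr K) (Dm D) ≤ Module.finrank F (Kr K) := by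
      rw [← hrq]
      calc Module.finrank D (Dm D →ₗ[Kr K] Dm D)
          = Module.finrank D ↥(⊤ : Submodule D (Dm D →ₗ[Kr K] Dm D)) := (finrank_top D _).symm
        _ = Module.finrank D ↥(Submodule.span D (Set.range fun i => ρ (bK i))) := by rw [htop]
        _ ≤ (Set.range fun i => ρ (bK i)).toFinset.card := finrank_span_le_card _
        _ ≤ Module.finrank F (Kr K) := by
            rw [Set.toFinset_range]
            exact (Finset.card_image_le).trans (by simp)
    have hnqeq : Module.finrank F (Kr K) = Module.finrank (Kr K) (Dm D) :=
      le_antisymm hnq hqn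
    nth_rewrite 2 [hnqeq]
    exact e1


end Core

/-- Let `D` be a division ring with center `F` and `K` a (commutative) subfield of `D`
containing `F`. If `dim_F D = m²`, then `dim_F K ≤ m`, with equality if and only if
`K` is a maximal subfield of `D`. -/
theorem subfield_dim_le_and_eq_iff_maximal
    {F D : Type*} [Field F] [DivisionRing D] [Algebra F D]
    (hcenter : Set.range (algebraMap F D) = Set.center D)
    [FiniteDimensional F D] (m : ℕ) (hdim : Module.finrank F D = m ^ 2)
    (K : Subfield D) (hKcomm : ∀ x ∈ K, ∀ y ∈ K, x * y = y * x)
    (hFK : Set.range (algebraMap F D) ⊆ K) :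
    Module.finrank F (K.toSubmoduleOver hFK) ≤ m ∧
      (Module.finrank F (K.toSubmoduleOver hFK) = m ↔ IsMaximalSubfield K) := by
  have h1 := core hcenter K hKcomm hFK
  have hm2 : Module.finrank F D = m * m := by rw [hdim, pow_two]
  rw [hm2] at h1
  have hle : Module.finrank F (K.toSubmoduleOver hFK) ≤ m := by nlinarith [h1.1]
  refine ⟨hle, ?_, ?_⟩
  · intro hEq
    refine ⟨hKcomm, fun L hLcomm hKL => ?_⟩
    have hFL : Set.range (algebraMap F D) ⊆ ↑L := fun x hx => hKL (hFK hx)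
    have h2 := (core hcenter L hLcomm hFL).1
    rw [hm2] at h2
    have h4 : Module.finrank F (L.toSubmoduleOver hFL) ≤ m := by nlinarith
    by_contra hne
    have hsub : K.toSubmoduleOver hFK ≤ L.toSubmoduleOver hFL := fun x hx => hKL hx
    have hlt : K.toSubmoduleOver hFK < L.toSubmoduleOver hFL := by
      refine lt_of_le_of_ne hsub fun h => hne ?_
      ext x
      constructor
      · exact fun hx => hKL hx
      · intro hx
        exact (h ▸ (hx : x ∈ L.toSubmoduleOver hFL) : x ∈ K.toSubmoduleOver hFK)
    have h5 := Submodule.finrank_lt_finrank_of_lt hlt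
    omega
  · intro hmax
    have h6 := h1.2 (fun c hc' => centralizer_le_of_maximal hmax c hc')
    nlinarith
end

section
/- Let F be an algebraically closed field and let f(x_1,…,x_n) be a multilinear polynomial over F that is non-central over M_2(F). Then for every matrix A ∈ M_2(F) with trace(A) = 0, there exist matrices T_1,…,T_n ∈ M_2(F) such that f(T_1,…,T_n) = A. -/
/-- Evaluation of the multilinear polynomial
`f(x_1,…,x_n) = ∑_{σ ∈ S_n} c σ • x_{σ(1)} x_{σ(2)} ⋯ x_{σ(n)}`
(given by its coefficient family `c`) at the tuple `T` in an `F`-algebra `R`. -/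
def mlEval {F : Type*} [CommSemiring F] {n : ℕ} (c : Equiv.Perm (Fin n) → F)
    {R : Type*} [Ring R] [Algebra F R] (T : Fin n → R) : R :=
  ∑ σ : Equiv.Perm (Fin n), c σ • (List.ofFn fun i => T (σ i)).prod

section general
variable {F : Type*} [CommSemiring F] {n : ℕ} (c : Equiv.Perm (Fin n) → F)
  {R : Type*} [Ring R] [Algebra F R]

lemma mlEval_eq (T : Fin n → R) :
    mlEval c T = ∑ σ : Equiv.Perm (Fin n), c σ • (MultilinearMap.mkPiAlgebraFin F n R) (T ∘ σ) := by
  simp only [mlEval, MultilinearMap.mkPiAlgebraFin_apply]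
  rfl

lemma mlEval_slot_add (T : Fin n → R) (i : Fin n) (X Y : R) :
    mlEval c (Function.update T i (X + Y)) =
      mlEval c (Function.update T i X) + mlEval c (Function.update T i Y) := by
  simp only [mlEval_eq]
  rw [← Finset.sum_add_distrib]
  refine Finset.sum_congr rfl fun σ _ => ?_
  rw [Function.update_comp_equiv, Function.update_comp_equiv, Function.update_comp_equiv,
    MultilinearMap.map_update_add, smul_add]

lemma mlEval_slot_smul (T : Fin n → R) (i : Fin n) (a : F) (X : R) :
    mlEval c (Function.update T i (a • X)) = a • mlEval c (Function.update T i X) := by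
  simp only [mlEval_eq, Finset.smul_sum]
  refine Finset.sum_congr rfl fun σ _ => ?_
  rw [Function.update_comp_equiv, Function.update_comp_equiv, MultilinearMap.map_update_smul,
    smul_comm]

lemma mlEval_slot_affine (T : Fin n → R) (i : Fin n) (a : F) (X : R) :
    mlEval c (Function.update T i (X + a • T i)) =
      mlEval c (Function.update T i X) + a • mlEval c T := by
  rw [mlEval_slot_add, mlEval_slot_smul, Function.update_eq_self]

lemma conj_list_prod (u : Rˣ) (l : List R) :
    (l.map fun x => (u : R) * x * (↑u⁻¹ : R)).prod = (u : R) * l.prod * (↑u⁻¹ : R) := by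
  induction l with
  | nil => simp
  | cons x l ih =>
      rw [List.map_cons, List.prod_cons, List.prod_cons, ih]
      simp [mul_assoc, Units.inv_mul_cancel_left]

lemma mlEval_conj (u : Rˣ) (T : Fin n → R) :
    mlEval c (fun i => ↑u * T i * ↑u⁻¹) = ↑u * mlEval c T * ↑u⁻¹ := by
  simp only [mlEval, Finset.mul_sum, Finset.sum_mul]
  refine Finset.sum_congr rfl fun σ _ => ?_
  rw [mul_smul_comm, smul_mul_assoc]
  congr 1
  rw [← conj_list_prod u, List.map_ofFn]
  rfl

lemma mlEval_zero (hn : 0 < n) : mlEval c (fun _ => (0 : R)) = 0 := by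
  have h : Function.update (fun _ : Fin n => (0 : R)) (⟨0, hn⟩ : Fin n) ((0 : F) • (0 : R)) =
      (fun _ : Fin n => (0 : R)) := by
    funext j
    rcases eq_or_ne j (⟨0, hn⟩ : Fin n) with h | h
    · subst h; simp
    · rw [Function.update_of_ne h]
  rw [← h, mlEval_slot_smul, zero_smul]

end general
section
variable {F : Type*} [Field F]
local notation "M2" => Matrix (Fin 2) (Fin 2) F

def Dg (X : M2) : Prop := X 0 1 = 0 ∧ X 1 0 = 0
def Og (X : M2) : Prop := X 0 0 = 0 ∧ X 1 1 = 0
def Hm (s : ZMod 2) (X : M2) : Prop := if s = 0 then Dg X else Og X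

lemma zmod2_cases (s : ZMod 2) : s = 0 ∨ s = 1 := by revert s; decide

lemma hm_zero_iff {X : M2} : Hm 0 X ↔ Dg X := by rw [Hm, if_pos rfl]
lemma hm_one_iff {X : M2} : Hm 1 X ↔ Og X := by rw [Hm, if_neg one_ne_zero]

lemma hm_zero (s : ZMod 2) : Hm s (0 : M2) := by
  rcases zmod2_cases s with h | h <;> subst h
  · exact hm_zero_iff.mpr ⟨rfl, rfl⟩
  · exact hm_one_iff.mpr ⟨rfl, rfl⟩

lemma hm_add {s : ZMod 2} {X Y : M2} (hX : Hm s X) (hY : Hm s Y) : Hm s (X + Y) := by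
  rcases zmod2_cases s with h | h <;> subst h
  · rw [hm_zero_iff] at *; exact ⟨by simp [Matrix.add_apply, hX.1, hY.1],
      by simp [Matrix.add_apply, hX.2, hY.2]⟩
  · rw [hm_one_iff] at *; exact ⟨by simp [Matrix.add_apply, hX.1, hY.1],
      by simp [Matrix.add_apply, hX.2, hY.2]⟩

lemma hm_smul {s : ZMod 2} {X : M2} (a : F) (hX : Hm s X) : Hm s (a • X) := by
  rcases zmod2_cases s with h | h <;> subst h
  · rw [hm_zero_iff] at *; exact ⟨by simp [Matrix.smul_apply, hX.1],
      by simp [Matrix.smul_apply, hX.2]⟩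
  · rw [hm_one_iff] at *; exact ⟨by simp [Matrix.smul_apply, hX.1],
      by simp [Matrix.smul_apply, hX.2]⟩

lemma hm_one : Hm 0 (1 : M2) := hm_zero_iff.mpr ⟨by simp, by simp⟩

lemma hm_mul {s t : ZMod 2} {X Y : M2} (hX : Hm s X) (hY : Hm t Y) : Hm (s + t) (X * Y) := by
  have e00 : (X * Y) 0 0 = X 0 0 * Y 0 0 + X 0 1 * Y 1 0 := by
    rw [Matrix.mul_apply, Fin.sum_univ_two]
  have e01 : (X * Y) 0 1 = X 0 0 * Y 0 1 + X 0 1 * Y 1 1 := by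
    rw [Matrix.mul_apply, Fin.sum_univ_two]
  have e10 : (X * Y) 1 0 = X 1 0 * Y 0 0 + X 1 1 * Y 1 0 := by
    rw [Matrix.mul_apply, Fin.sum_univ_two]
  have e11 : (X * Y) 1 1 = X 1 0 * Y 0 1 + X 1 1 * Y 1 1 := by
    rw [Matrix.mul_apply, Fin.sum_univ_two]
  rcases zmod2_cases s with hs | hs <;> rcases zmod2_cases t with ht | ht <;>
    subst hs <;> subst ht
  · rw [hm_zero_iff] at hX hY
    rw [(by decide : (0 + 0 : ZMod 2) = 0), hm_zero_iff]
    exact ⟨by rw [e01, hX.1, hY.1]; ring, by rw [e10, hX.2, hY.2]; ring⟩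
  · rw [hm_zero_iff] at hX; rw [hm_one_iff] at hY
    rw [(by decide : (0 + 1 : ZMod 2) = 1), hm_one_iff]
    exact ⟨by rw [e00, hX.1, hY.1]; ring, by rw [e11, hX.2, hY.2]; ring⟩
  · rw [hm_one_iff] at hX; rw [hm_zero_iff] at hY
    rw [(by decide : (1 + 0 : ZMod 2) = 1), hm_one_iff]
    exact ⟨by rw [e00, hX.1, hY.2]; ring, by rw [e11, hX.2, hY.1]; ring⟩
  · rw [hm_one_iff] at hX hY
    rw [(by decide : (1 + 1 : ZMod 2) = 0), hm_zero_iff]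
    exact ⟨by rw [e01, hX.1, hY.2]; ring, by rw [e10, hX.2, hY.1]; ring⟩
lemma list_prod_hm {F : Type*} [Field F] : ∀ (m : ℕ) (p : Fin m → ZMod 2)
    (g : Fin m → Matrix (Fin 2) (Fin 2) F),
    (∀ i, Hm (p i) (g i)) → Hm (∑ i, p i) (List.ofFn g).prod
  | 0, p, g, _ => by
      rw [List.ofFn_zero, List.prod_nil, Finset.univ_eq_empty, Finset.sum_empty]
      exact hm_one
  | m + 1, p, g, h => by
      rw [List.ofFn_succ, List.prod_cons, Fin.sum_univ_succ]
      exact hm_mul (h 0) (list_prod_hm m _ _ fun i => h i.succ)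

variable {F : Type*} [Field F] {n : ℕ} (c : Equiv.Perm (Fin n) → F)

lemma mlEval_hm (d : Fin n → ZMod 2) (T : Fin n → Matrix (Fin 2) (Fin 2) F)
    (hT : ∀ i, Hm (d i) (T i)) : Hm (∑ i, d i) (mlEval c T) := by
  rw [mlEval]
  refine Finset.sum_induction _ (Hm (∑ i, d i)) (fun a b ha hb => hm_add ha hb)
    (hm_zero _) fun σ _ => ?_
  refine hm_smul _ ?_
  have h := list_prod_hm n (d ∘ σ) (fun i => T (σ i)) (fun i => hT (σ i))
  rw [← Equiv.sum_comp σ d]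
  exact h

lemma all_of_homog (Q : Matrix (Fin 2) (Fin 2) F → Prop)
    (Qadd : ∀ X Y, Q X → Q Y → Q (X + Y))
    (hQ : ∀ (d : Fin n → ZMod 2) (T : Fin n → Matrix (Fin 2) (Fin 2) F),
      (∀ i, Hm (d i) (T i)) → Q (mlEval c T)) :
    ∀ T, Q (mlEval c T) := by
  have aux : ∀ (m : ℕ) (T : Fin n → Matrix (Fin 2) (Fin 2) F),
      (∀ i : Fin n, m ≤ (i : ℕ) → ∃ s, Hm s (T i)) → Q (mlEval c T) := by
    intro m
    induction m with
    | zero =>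
        intro T h
        choose d hd using fun i => h i (Nat.zero_le _)
        exact hQ d T hd
    | succ m ih =>
        intro T h
        by_cases hm : m < n
        · set i0 : Fin n := ⟨m, hm⟩ with hi0
          set D : Matrix (Fin 2) (Fin 2) F := !![T i0 0 0, 0; 0, T i0 1 1] with hD
          set O : Matrix (Fin 2) (Fin 2) F := !![0, T i0 0 1; T i0 1 0, 0] with hO
          have hdec : T i0 = D + O := by
            ext i j
            fin_cases i <;> fin_cases j <;> simp [hD, hO]
          have key : mlEval c T = mlEval c (Function.update T i0 D) +
              mlEval c (Function.update T i0 O) := by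
            conv_lhs => rw [← Function.update_eq_self i0 T, hdec]
            exact mlEval_slot_add c T i0 D O
          rw [key]
          refine Qadd _ _ (ih _ fun i hi => ?_) (ih _ fun i hi => ?_)
          · rcases eq_or_ne i i0 with rfl | hii
            · exact ⟨0, by rw [Function.update_self, hm_zero_iff]; exact ⟨by simp [hD], by simp [hD]⟩⟩
            · rw [Function.update_of_ne hii]
              refine h i ?_
              rcases Nat.lt_or_ge (i : ℕ) (m + 1) with hlt | hge
              · exfalso; exact hii (Fin.ext (by omega : (i : ℕ) = m))
              · exact hge
          · rcases eq_or_ne i i0 with rfl | hii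
            · exact ⟨1, by rw [Function.update_self, hm_one_iff]; exact ⟨by simp [hO], by simp [hO]⟩⟩
            · rw [Function.update_of_ne hii]
              refine h i ?_
              rcases Nat.lt_or_ge (i : ℕ) (m + 1) with hlt | hge
              · exfalso; exact hii (Fin.ext (by omega : (i : ℕ) = m))
              · exact hge
        · exact ih T fun i hi => absurd i.isLt (by omega)
  exact fun T => aux n T (fun i hi => absurd i.isLt (by omega))

lemma lemL (d : Fin n → ZMod 2)
    (Hyp : ∀ S : Fin n → Matrix (Fin 2) (Fin 2) F, (∀ i, Hm (d i) (S i)) → mlEval c S ≠ 0 →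
      ∀ (k : Fin n) (X : Matrix (Fin 2) (Fin 2) F), Hm (d k) X →
        ∃ a : F, mlEval c (Function.update S k X) = a • mlEval c S) :
    ∀ (S T : Fin n → Matrix (Fin 2) (Fin 2) F), (∀ i, Hm (d i) (S i)) → (∀ i, Hm (d i) (T i)) →
      mlEval c S ≠ 0 → ∃ a : F, mlEval c T = a • mlEval c S := by
  set R : ℕ → Prop := fun k => ∀ (S T : Fin n → Matrix (Fin 2) (Fin 2) F),
    (∀ i, Hm (d i) (S i)) → (∀ i, Hm (d i) (T i)) → mlEval c S ≠ 0 →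
    (∀ j : Fin n, (j : ℕ) < k → T j = S j) → ∃ a : F, mlEval c T = a • mlEval c S with hR
  have triv : ∀ k, n ≤ k → R k := by
    intro k hk S T hS hT hne hagree
    have : T = S := funext fun j => hagree j (lt_of_lt_of_le j.isLt hk)
    exact ⟨1, by rw [this, one_smul]⟩
  have step : ∀ k, R (k + 1) → R k := by
    intro k hRk S T hS hT hne hagree
    by_cases hkn : k < n
    · set k' : Fin n := ⟨k, hkn⟩ with hk'
      have hjlt : ∀ j : Fin n, (j : ℕ) < k → j ≠ k' :=
        fun j hj hcon => by rw [hcon] at hj; exact absurd hj (lt_irrefl k)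
      by_cases h1 : mlEval c (Function.update S k' (T k')) = 0
      · -- case β
        have hS2h : ∀ i, Hm (d i) ((Function.update S k' (T k' + S k')) i) := by
          intro i
          rcases eq_or_ne i k' with hii | hii
          · rw [hii, Function.update_self]; exact hm_add (hT k') (hS k')
          · rw [Function.update_of_ne hii]; exact hS i
        have hS2val : mlEval c (Function.update S k' (T k' + S k')) = mlEval c S := by
          rw [mlEval_slot_add, h1, zero_add, Function.update_eq_self]
        have hT1h : ∀ i, Hm (d i) ((Function.update T k' (T k' + S k')) i) := by
          intro i
          rcases eq_or_ne i k' with hii | hii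
          · rw [hii, Function.update_self]; exact hm_add (hT k') (hS k')
          · rw [Function.update_of_ne hii]; exact hT i
        have hT2h : ∀ i, Hm (d i) ((Function.update T k' (S k')) i) := by
          intro i
          rcases eq_or_ne i k' with hii | hii
          · rw [hii, Function.update_self]; exact hS k'
          · rw [Function.update_of_ne hii]; exact hT i
        have e1 : mlEval c (Function.update T k' (T k' + S k')) =
            mlEval c T + mlEval c (Function.update T k' (S k')) := by
          rw [mlEval_slot_add, Function.update_eq_self]
        obtain ⟨a1, ha1⟩ := hRk (Function.update S k' (T k' + S k'))
          (Function.update T k' (T k' + S k')) hS2h hT1h (hS2val ▸ hne)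
          (fun j hj => by
            rcases eq_or_ne j k' with hjj | hjj
            · rw [hjj, Function.update_self, Function.update_self]
            · rw [Function.update_of_ne hjj, Function.update_of_ne hjj]
              exact hagree j (by
                have := hjlt j
                rcases Nat.lt_succ_iff_lt_or_eq.mp hj with h | h
                · exact h
                · exact absurd (Fin.ext h) hjj))
        obtain ⟨a2, ha2⟩ := hRk S (Function.update T k' (S k')) hS hT2h hne
          (fun j hj => by
            rcases eq_or_ne j k' with hjj | hjj
            · rw [hjj, Function.update_self]
            · rw [Function.update_of_ne hjj]
              exact hagree j (by
                rcases Nat.lt_succ_iff_lt_or_eq.mp hj with h | h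
                · exact h
                · exact absurd (Fin.ext h) hjj))
        refine ⟨a1 - a2, ?_⟩
        have : mlEval c T = mlEval c (Function.update T k' (T k' + S k')) -
            mlEval c (Function.update T k' (S k')) := by rw [e1]; abel
        rw [this, ha1, ha2, hS2val, sub_smul]
      · -- case α
        obtain ⟨μ, hμ⟩ := Hyp S hS hne k' (T k') (hT k')
        have hS1h : ∀ i, Hm (d i) ((Function.update S k' (T k')) i) := by
          intro i
          rcases eq_or_ne i k' with hii | hii
          · rw [hii, Function.update_self]; exact hT k'
          · rw [Function.update_of_ne hii]; exact hS i
        obtain ⟨ν, hν⟩ := hRk (Function.update S k' (T k')) T hS1h hT h1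
          (fun j hj => by
            rcases eq_or_ne j k' with hjj | hjj
            · rw [hjj, Function.update_self]
            · rw [Function.update_of_ne hjj]
              exact hagree j (by
                rcases Nat.lt_succ_iff_lt_or_eq.mp hj with h | h
                · exact h
                · exact absurd (Fin.ext h) hjj))
        exact ⟨ν * μ, by rw [hν, hμ, smul_smul]⟩
    · exact triv k (by omega) S T hS hT hne hagree
  have main : ∀ j : ℕ, R (n - j) := by
    intro j
    induction j with
    | zero => exact triv (n - 0) (by omega)
    | succ j ih =>
        by_cases hj : n ≤ j
        · have e : n - (j + 1) = n - j := by omega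
          exact e ▸ ih
        · have e : n - j = (n - (j + 1)) + 1 := by omega
          exact step _ (e ▸ ih)
  intro S T hS hT hne
  exact main n S T hS hT hne (fun j hj => absurd hj (by omega))

def swapU : (Matrix (Fin 2) (Fin 2) F)ˣ :=
  ⟨!![0,1;1,0], !![0,1;1,0],
    by ext i j; fin_cases i <;> fin_cases j <;> simp [Matrix.mul_apply, Fin.sum_univ_two],
    by ext i j; fin_cases i <;> fin_cases j <;> simp [Matrix.mul_apply, Fin.sum_univ_two]⟩

def diagU (t : F) (ht : t ≠ 0) : (Matrix (Fin 2) (Fin 2) F)ˣ :=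
  ⟨!![t,0;0,1], !![t⁻¹,0;0,1],
    by ext i j; fin_cases i <;> fin_cases j <;>
      simp [Matrix.mul_apply, Fin.sum_univ_two, mul_inv_cancel₀ ht, inv_mul_cancel₀ ht],
    by ext i j; fin_cases i <;> fin_cases j <;>
      simp [Matrix.mul_apply, Fin.sum_univ_two, mul_inv_cancel₀ ht, inv_mul_cancel₀ ht]⟩

def uppU : (Matrix (Fin 2) (Fin 2) F)ˣ :=
  ⟨!![1,1;0,1], !![1,-1;0,1],
    by ext i j; fin_cases i <;> fin_cases j <;> simp [Matrix.mul_apply, Fin.sum_univ_two],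
    by ext i j; fin_cases i <;> fin_cases j <;> simp [Matrix.mul_apply, Fin.sum_univ_two]⟩

def lowU : (Matrix (Fin 2) (Fin 2) F)ˣ :=
  ⟨!![1,0;1,1], !![1,0;-1,1],
    by ext i j; fin_cases i <;> fin_cases j <;> simp [Matrix.mul_apply, Fin.sum_univ_two],
    by ext i j; fin_cases i <;> fin_cases j <;> simp [Matrix.mul_apply, Fin.sum_univ_two]⟩

lemma conj_swap (X : Matrix (Fin 2) (Fin 2) F) :
    ((swapU (F:=F) : (Matrix (Fin 2) (Fin 2) F)ˣ) : Matrix (Fin 2) (Fin 2) F) * X * (((swapU (F:=F))⁻¹ : (Matrix (Fin 2) (Fin 2) F)ˣ) : Matrix (Fin 2) (Fin 2) F) =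
      !![X 1 1, X 1 0; X 0 1, X 0 0] := by
  show (!![0,1;1,0] : Matrix (Fin 2) (Fin 2) F) * X * !![0,1;1,0] = _
  conv_lhs => rw [Matrix.eta_fin_two X]
  rw [Matrix.mul_fin_two, Matrix.mul_fin_two]
  ext i j; fin_cases i <;> fin_cases j <;> (simp; try ring)

lemma conj_diag (t : F) (ht : t ≠ 0) (X : Matrix (Fin 2) (Fin 2) F) :
    ((diagU t ht : (Matrix (Fin 2) (Fin 2) F)ˣ) : Matrix (Fin 2) (Fin 2) F) * X *
      (((diagU t ht)⁻¹ : (Matrix (Fin 2) (Fin 2) F)ˣ) : Matrix (Fin 2) (Fin 2) F) =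
      !![X 0 0, t * X 0 1; t⁻¹ * X 1 0, X 1 1] := by
  show (!![t,0;0,1] : Matrix (Fin 2) (Fin 2) F) * X * !![t⁻¹,0;0,1] = _
  conv_lhs => rw [Matrix.eta_fin_two X]
  rw [Matrix.mul_fin_two, Matrix.mul_fin_two]
  ext i j; fin_cases i <;> fin_cases j <;>
    (simp; try field_simp; try ring)

lemma conj_upp (X : Matrix (Fin 2) (Fin 2) F) :
    ((uppU (F:=F) : (Matrix (Fin 2) (Fin 2) F)ˣ) : Matrix (Fin 2) (Fin 2) F) * X *
      (((uppU (F:=F))⁻¹ : (Matrix (Fin 2) (Fin 2) F)ˣ) : Matrix (Fin 2) (Fin 2) F) =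
      !![X 0 0 + X 1 0, X 0 1 + X 1 1 - X 0 0 - X 1 0; X 1 0, X 1 1 - X 1 0] := by
  show (!![1,1;0,1] : Matrix (Fin 2) (Fin 2) F) * X * !![1,-1;0,1] = _
  conv_lhs => rw [Matrix.eta_fin_two X]
  rw [Matrix.mul_fin_two, Matrix.mul_fin_two]
  ext i j; fin_cases i <;> fin_cases j <;> (simp; try ring)

lemma conj_low (X : Matrix (Fin 2) (Fin 2) F) :
    ((lowU (F:=F) : (Matrix (Fin 2) (Fin 2) F)ˣ) : Matrix (Fin 2) (Fin 2) F) * X *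
      (((lowU (F:=F))⁻¹ : (Matrix (Fin 2) (Fin 2) F)ˣ) : Matrix (Fin 2) (Fin 2) F) =
      !![X 0 0 - X 0 1, X 0 1; X 0 0 + X 1 0 - X 0 1 - X 1 1, X 0 1 + X 1 1] := by
  show (!![1,0;1,1] : Matrix (Fin 2) (Fin 2) F) * X * !![1,0;-1,1] = _
  conv_lhs => rw [Matrix.eta_fin_two X]
  rw [Matrix.mul_fin_two, Matrix.mul_fin_two]
  ext i j; fin_cases i <;> fin_cases j <;> (simp; try ring)

lemma hm_conj_swap {s : ZMod 2} {X : Matrix (Fin 2) (Fin 2) F} (hX : Hm s X) :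
    Hm s (((swapU (F:=F) : (Matrix (Fin 2) (Fin 2) F)ˣ) : Matrix (Fin 2) (Fin 2) F) * X *
      (((swapU (F:=F))⁻¹ : (Matrix (Fin 2) (Fin 2) F)ˣ) : Matrix (Fin 2) (Fin 2) F)) := by
  rw [conj_swap]
  rcases zmod2_cases s with h | h <;> subst h
  · rw [hm_zero_iff] at *; exact ⟨by simp [hX.2], by simp [hX.1]⟩
  · rw [hm_one_iff] at *; exact ⟨by simp [hX.2], by simp [hX.1]⟩

lemma hm_conj_diag {s : ZMod 2} (t : F) (ht : t ≠ 0) {X : Matrix (Fin 2) (Fin 2) F} (hX : Hm s X) :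
    Hm s (((diagU t ht : (Matrix (Fin 2) (Fin 2) F)ˣ) : Matrix (Fin 2) (Fin 2) F) * X *
      (((diagU t ht)⁻¹ : (Matrix (Fin 2) (Fin 2) F)ˣ) : Matrix (Fin 2) (Fin 2) F)) := by
  rw [conj_diag]
  rcases zmod2_cases s with h | h <;> subst h
  · rw [hm_zero_iff] at *; exact ⟨by simp [hX.1], by simp [hX.2]⟩
  · rw [hm_one_iff] at *; exact ⟨by simp [hX.1], by simp [hX.2]⟩

lemma mlEval_slot_add' (S : Fin n → Matrix (Fin 2) (Fin 2) F) (k : Fin n)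
    (X : Matrix (Fin 2) (Fin 2) F) :
    mlEval c (Function.update S k (X + S k)) = mlEval c (Function.update S k X) + mlEval c S := by
  rw [mlEval_slot_add, Function.update_eq_self]

lemma update_hm {d : Fin n → ZMod 2} {S : Fin n → Matrix (Fin 2) (Fin 2) F}
    (hS : ∀ i, Hm (d i) (S i)) {k : Fin n} {X : Matrix (Fin 2) (Fin 2) F}
    (hX : Hm (d k) X) : ∀ i, Hm (d i) (Function.update S k X i) := by
  intro i
  rcases eq_or_ne i k with hik | hik
  · rw [hik, Function.update_self]; exact hik ▸ hX
  · rw [Function.update_of_ne hik]; exact hS i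

lemma hall_conj {Q : Matrix (Fin 2) (Fin 2) F → Prop}
    (hall : ∀ T : Fin n → Matrix (Fin 2) (Fin 2) F, Q (mlEval c T))
    (u : (Matrix (Fin 2) (Fin 2) F)ˣ) (T : Fin n → Matrix (Fin 2) (Fin 2) F) :
    Q ((u : Matrix (Fin 2) (Fin 2) F) * mlEval c T * ((u⁻¹ : (Matrix (Fin 2) (Fin 2) F)ˣ) : Matrix (Fin 2) (Fin 2) F)) := by
  have h := hall (fun i => (u : Matrix (Fin 2) (Fin 2) F) * T i * ((u⁻¹ : (Matrix (Fin 2) (Fin 2) F)ˣ) : Matrix (Fin 2) (Fin 2) F))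
  rwa [mlEval_conj] at h

lemma commonD
    (hf : ¬ ∀ T : Fin n → Matrix (Fin 2) (Fin 2) F, ∃ a : F, mlEval c T = a • 1)
    (hodd : ∀ (d : Fin n → ZMod 2) (S : Fin n → Matrix (Fin 2) (Fin 2) F),
      (∀ i, Hm (d i) (S i)) → (∑ i, d i) = 1 → mlEval c S = 0) : False := by
  have hall : ∀ T : Fin n → Matrix (Fin 2) (Fin 2) F, Dg (mlEval c T) := by
    refine all_of_homog c Dg (fun X Y hX hY =>
      ⟨by simp [Matrix.add_apply, hX.1, hY.1], by simp [Matrix.add_apply, hX.2, hY.2]⟩) ?_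
    intro d T hT
    rcases zmod2_cases (∑ i, d i) with h | h
    · have h2 := mlEval_hm c d T hT; rw [h, hm_zero_iff] at h2; exact h2
    · rw [hodd d T hT h]; exact ⟨rfl, rfl⟩
  push_neg at hf
  obtain ⟨T, hT⟩ := hf
  have hB := hall T
  have hB' := hall_conj c hall (uppU (F:=F)) T
  rw [conj_upp] at hB'
  have h01 : mlEval c T 0 1 + mlEval c T 1 1 - mlEval c T 0 0 - mlEval c T 1 0 = 0 := by
    have h3 := hB'.1; simpa using h3
  have h11 : mlEval c T 1 1 = mlEval c T 0 0 := by
    linear_combination h01 - hB.1 + hB.2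
  refine hT (mlEval c T 0 0) ?_
  ext i j
  fin_cases i <;> fin_cases j <;>
    simp [Matrix.smul_apply, Matrix.one_apply, hB.1, hB.2, h11]

lemma commonO
    (hf : ¬ ∀ T : Fin n → Matrix (Fin 2) (Fin 2) F, ∃ a : F, mlEval c T = a • 1)
    (heven : ∀ (d : Fin n → ZMod 2) (S : Fin n → Matrix (Fin 2) (Fin 2) F),
      (∀ i, Hm (d i) (S i)) → (∑ i, d i) = 0 → mlEval c S = 0) : False := by
  have hall : ∀ T : Fin n → Matrix (Fin 2) (Fin 2) F, Og (mlEval c T) := by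
    refine all_of_homog c Og (fun X Y hX hY =>
      ⟨by simp [Matrix.add_apply, hX.1, hY.1], by simp [Matrix.add_apply, hX.2, hY.2]⟩) ?_
    intro d T hT
    rcases zmod2_cases (∑ i, d i) with h | h
    · rw [heven d T hT h]; exact ⟨rfl, rfl⟩
    · have h2 := mlEval_hm c d T hT; rw [h, hm_one_iff] at h2; exact h2
  push_neg at hf
  obtain ⟨T, hT⟩ := hf
  have hB := hall T
  have hB1 := hall_conj c hall (uppU (F:=F)) T
  rw [conj_upp] at hB1
  have hc : mlEval c T 1 0 = 0 := by
    have h3 := hB1.1; simp at h3; linear_combination h3 - hB.1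
  have hB2 := hall_conj c hall (lowU (F:=F)) T
  rw [conj_low] at hB2
  have hb : mlEval c T 0 1 = 0 := by
    have h3 := hB2.1; simp at h3; linear_combination hB.1 - h3
  refine hT 0 ?_
  ext i j
  fin_cases i <;> fin_cases j <;>
    simp [Matrix.smul_apply, Matrix.one_apply, hB.1, hB.2, hb, hc]

lemma exists_nilp_value [IsAlgClosed F]
    (hf : ¬ ∀ T : Fin n → Matrix (Fin 2) (Fin 2) F, ∃ a : F, mlEval c T = a • 1) :
    ∃ T : Fin n → Matrix (Fin 2) (Fin 2) F, mlEval c T ≠ 0 ∧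
      mlEval c T 0 0 + mlEval c T 1 1 = 0 ∧
      mlEval c T 0 0 * mlEval c T 1 1 - mlEval c T 0 1 * mlEval c T 1 0 = 0 := by
  classical
  by_contra hno
  push_neg at hno
  by_cases hodd : ∀ (d : Fin n → ZMod 2) (S : Fin n → Matrix (Fin 2) (Fin 2) F),
      (∀ i, Hm (d i) (S i)) → (∑ i, d i) = 1 → mlEval c S = 0
  · exact commonD c hf hodd
  · push_neg at hodd
    obtain ⟨d, S, hSh, hd1, hSne⟩ := hodd
    have hOg : ∀ T' : Fin n → Matrix (Fin 2) (Fin 2) F,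
        (∀ i, Hm (d i) (T' i)) → Og (mlEval c T') := fun T' hT' => by
      have h2 := mlEval_hm c d T' hT'; rwa [hd1, hm_one_iff] at h2
    have hbc : ∀ T' : Fin n → Matrix (Fin 2) (Fin 2) F, (∀ i, Hm (d i) (T' i)) →
        mlEval c T' ≠ 0 → mlEval c T' 0 1 ≠ 0 ∧ mlEval c T' 1 0 ≠ 0 := by
      intro T' hT' hne
      have hOgT := hOg T' hT'
      have htr : mlEval c T' 0 0 + mlEval c T' 1 1 = 0 := by rw [hOgT.1, hOgT.2, add_zero]
      have hdet := hno T' hne htr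
      constructor
      · intro h; exact hdet (by rw [hOgT.1, hOgT.2, h]; ring)
      · intro h; exact hdet (by rw [hOgT.1, hOgT.2, h]; ring)
    have Hyp : ∀ S' : Fin n → Matrix (Fin 2) (Fin 2) F, (∀ i, Hm (d i) (S' i)) →
        mlEval c S' ≠ 0 → ∀ (k : Fin n) (X : Matrix (Fin 2) (Fin 2) F), Hm (d k) X →
        ∃ a : F, mlEval c (Function.update S' k X) = a • mlEval c S' := by
      intro S' hS'h hS'ne k X hX
      obtain ⟨hb, hc⟩ := hbc S' hS'h hS'ne
      set t0 : F := -(mlEval c (Function.update S' k X) 0 1) / (mlEval c S' 0 1) with ht0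
      have hcfg : ∀ i, Hm (d i) ((Function.update S' k (X + t0 • S' k)) i) :=
        update_hm hS'h (hm_add hX (hm_smul t0 (hS'h k)))
      have hval : mlEval c (Function.update S' k (X + t0 • S' k)) =
          mlEval c (Function.update S' k X) + t0 • mlEval c S' := mlEval_slot_affine c S' k t0 X
      have h01 : mlEval c (Function.update S' k (X + t0 • S' k)) 0 1 = 0 := by
        rw [hval]
        simp only [Matrix.add_apply, Matrix.smul_apply, smul_eq_mul]
        rw [ht0]
        field_simp
        ring
      have hzero : mlEval c (Function.update S' k (X + t0 • S' k)) = 0 := by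
        by_contra hnz
        exact (hbc _ hcfg hnz).1 h01
      refine ⟨-t0, ?_⟩
      rw [hzero] at hval
      rw [neg_smul, eq_neg_iff_add_eq_zero, ← hval]
    obtain ⟨t, ht⟩ := Infinite.exists_notMem_finset ({0, 1, -1} : Finset F)
    simp only [Finset.mem_insert, Finset.mem_singleton, not_or] at ht
    obtain ⟨ht0, ht1, htm1⟩ := ht
    have hconjh : ∀ i, Hm (d i)
        (((diagU t ht0 : (Matrix (Fin 2) (Fin 2) F)ˣ) : Matrix (Fin 2) (Fin 2) F) * S i *
          ((((diagU t ht0)⁻¹ : (Matrix (Fin 2) (Fin 2) F)ˣ)) : Matrix (Fin 2) (Fin 2) F)) :=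
      fun i => hm_conj_diag t ht0 (hSh i)
    obtain ⟨a, ha⟩ := lemL c d Hyp S
      (fun i => ((diagU t ht0 : (Matrix (Fin 2) (Fin 2) F)ˣ) : Matrix (Fin 2) (Fin 2) F) * S i *
        ((((diagU t ht0)⁻¹ : (Matrix (Fin 2) (Fin 2) F)ˣ)) : Matrix (Fin 2) (Fin 2) F))
      hSh hconjh hSne
    rw [mlEval_conj, conj_diag] at ha
    obtain ⟨hb, hc⟩ := hbc S hSh hSne
    have e1 : t * mlEval c S 0 1 = a * mlEval c S 0 1 := by
      have h3 := congrFun (congrFun ha 0) 1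
      simpa [Matrix.smul_apply] using h3
    have e2 : t⁻¹ * mlEval c S 1 0 = a * mlEval c S 1 0 := by
      have h3 := congrFun (congrFun ha 1) 0
      simpa [Matrix.smul_apply] using h3
    have hat : t = a := mul_right_cancel₀ hb e1
    have hat' : t⁻¹ = a := mul_right_cancel₀ hc e2
    have h5 : t = t⁻¹ := hat.trans hat'.symm
    have htt : t * t = 1 := by
      nth_rewrite 2 [h5]
      exact mul_inv_cancel₀ ht0
    rcases mul_self_eq_one_iff.mp htt with h | h
    · exact ht1 h
    · exact htm1 h

lemma exists_split_value [IsAlgClosed F]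
    (hf : ¬ ∀ T : Fin n → Matrix (Fin 2) (Fin 2) F, ∃ a : F, mlEval c T = a • 1) :
    ∃ T : Fin n → Matrix (Fin 2) (Fin 2) F,
      mlEval c T 0 0 + mlEval c T 1 1 = 0 ∧
      mlEval c T 0 0 * mlEval c T 1 1 - mlEval c T 0 1 * mlEval c T 1 0 ≠ 0 ∧
      ∀ a : F, mlEval c T ≠ a • 1 := by
  by_contra hno
  push_neg at hno
  by_cases hodd : ∀ (d : Fin n → ZMod 2) (S : Fin n → Matrix (Fin 2) (Fin 2) F),
      (∀ i, Hm (d i) (S i)) → (∑ i, d i) = 1 → mlEval c S = 0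
  · exact commonD c hf hodd
  · push_neg at hodd
    obtain ⟨d, S, hSh, hd1, hSne⟩ := hodd
    have hOg : ∀ T' : Fin n → Matrix (Fin 2) (Fin 2) F,
        (∀ i, Hm (d i) (T' i)) → Og (mlEval c T') := fun T' hT' => by
      have h2 := mlEval_hm c d T' hT'; rwa [hd1, hm_one_iff] at h2
    have haxis : ∀ T' : Fin n → Matrix (Fin 2) (Fin 2) F, (∀ i, Hm (d i) (T' i)) →
        mlEval c T' 0 1 * mlEval c T' 1 0 = 0 := by
      intro T' hT'
      have hOgT := hOg T' hT'
      by_contra hd2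
      have htr : mlEval c T' 0 0 + mlEval c T' 1 1 = 0 := by rw [hOgT.1, hOgT.2, add_zero]
      have hdet : mlEval c T' 0 0 * mlEval c T' 1 1 -
          mlEval c T' 0 1 * mlEval c T' 1 0 ≠ 0 := by
        rw [hOgT.1, hOgT.2]
        intro h; apply hd2; linear_combination -h
      obtain ⟨a, ha⟩ := hno T' htr hdet
      have ha00 : a = 0 := by
        have h3 := congrFun (congrFun ha 0) 0
        rw [hOgT.1] at h3
        simpa [Matrix.smul_apply, Matrix.one_apply] using h3.symm
      rw [ha00, zero_smul] at ha
      rw [ha] at hd2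
      simp at hd2
    have hnb : ∀ T' : Fin n → Matrix (Fin 2) (Fin 2) F, (∀ i, Hm (d i) (T' i)) →
        mlEval c T' ≠ 0 → ¬(mlEval c T' 0 1 = 0 ∧ mlEval c T' 1 0 = 0) := by
      intro T' hT' hne ⟨h1, h2⟩
      have hOgT := hOg T' hT'
      apply hne
      ext i j
      fin_cases i <;> fin_cases j <;> simp [hOgT.1, hOgT.2, h1, h2]
    have Hyp : ∀ S' : Fin n → Matrix (Fin 2) (Fin 2) F, (∀ i, Hm (d i) (S' i)) →
        mlEval c S' ≠ 0 → ∀ (k : Fin n) (X : Matrix (Fin 2) (Fin 2) F), Hm (d k) X →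
        ∃ a : F, mlEval c (Function.update S' k X) = a • mlEval c S' := by
      intro S' hS'h hS'ne k X hX
      have hOgS' := hOg S' hS'h
      have hOgW := hOg _ (update_hm hS'h hX)
      have haxW := haxis _ (update_hm hS'h hX)
      have hcfg : ∀ i, Hm (d i) ((Function.update S' k (X + S' k)) i) :=
        update_hm hS'h (hm_add hX (hS'h k))
      have haxsum := haxis _ hcfg
      have hsum := mlEval_slot_add' c S' k X
      rw [hsum] at haxsum
      simp only [Matrix.add_apply] at haxsum
      by_cases hb0 : mlEval c S' 0 1 = 0
      · have hc0 : mlEval c S' 1 0 ≠ 0 := fun h => hnb S' hS'h hS'ne ⟨hb0, h⟩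
        have hβ : mlEval c (Function.update S' k X) 0 1 = 0 := by
          by_contra hβ
          have hγ : mlEval c (Function.update S' k X) 1 0 = 0 := by
            rcases mul_eq_zero.mp haxW with h | h
            · exact absurd h hβ
            · exact h
          rw [hb0, hγ] at haxsum
          rcases mul_eq_zero.mp haxsum with h | h
          · simp at h; exact hβ h
          · simp at h; exact hc0 h
        refine ⟨mlEval c (Function.update S' k X) 1 0 / mlEval c S' 1 0, ?_⟩
        ext i j
        fin_cases i <;> fin_cases j <;>
          simp [Matrix.smul_apply, hOgW.1, hOgW.2, hOgS'.1, hOgS'.2, hβ, hb0,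
            div_mul_cancel₀ _ hc0]
      · have hc0 : mlEval c S' 1 0 = 0 := by
          rcases mul_eq_zero.mp (haxis S' hS'h) with h | h
          · exact absurd h hb0
          · exact h
        have hγ : mlEval c (Function.update S' k X) 1 0 = 0 := by
          by_contra hγ
          have hβ : mlEval c (Function.update S' k X) 0 1 = 0 := by
            rcases mul_eq_zero.mp haxW with h | h
            · exact h
            · exact absurd h hγ
          rw [hβ, hc0] at haxsum
          rcases mul_eq_zero.mp haxsum with h | h
          · simp at h; exact hb0 h
          · simp at h; exact hγ h
        refine ⟨mlEval c (Function.update S' k X) 0 1 / mlEval c S' 0 1, ?_⟩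
        ext i j
        fin_cases i <;> fin_cases j <;>
          simp [Matrix.smul_apply, hOgW.1, hOgW.2, hOgS'.1, hOgS'.2, hγ, hc0,
            div_mul_cancel₀ _ hb0]
    obtain ⟨a, ha⟩ := lemL c d Hyp S
      (fun i => ((swapU (F:=F) : (Matrix (Fin 2) (Fin 2) F)ˣ) : Matrix (Fin 2) (Fin 2) F) * S i *
        ((((swapU (F:=F))⁻¹ : (Matrix (Fin 2) (Fin 2) F)ˣ)) : Matrix (Fin 2) (Fin 2) F))
      hSh (fun i => hm_conj_swap (hSh i)) hSne
    rw [mlEval_conj, conj_swap] at ha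
    have e1 : mlEval c S 1 0 = a * mlEval c S 0 1 := by
      have h3 := congrFun (congrFun ha 0) 1; simpa [Matrix.smul_apply] using h3
    have e2 : mlEval c S 0 1 = a * mlEval c S 1 0 := by
      have h3 := congrFun (congrFun ha 1) 0; simpa [Matrix.smul_apply] using h3
    by_cases hb0 : mlEval c S 0 1 = 0
    · have hc0 : mlEval c S 1 0 ≠ 0 := fun h => hnb S hSh hSne ⟨hb0, h⟩
      exact hc0 (by rw [e1, hb0, mul_zero])
    · have hc0 : mlEval c S 1 0 = 0 := by
        rcases mul_eq_zero.mp (haxis S hSh) with h | h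
        · exact absurd h hb0
        · exact h
      exact hb0 (by rw [e2, hc0, mul_zero])

lemma exists_scalar_value [IsAlgClosed F] (h2 : (2:F) = 0)
    (hf : ¬ ∀ T : Fin n → Matrix (Fin 2) (Fin 2) F, ∃ a : F, mlEval c T = a • 1) :
    ∃ (T : Fin n → Matrix (Fin 2) (Fin 2) F) (s : F), mlEval c T = s • 1 ∧ s ≠ 0 := by
  by_contra hno
  push_neg at hno
  by_cases heven : ∀ (d : Fin n → ZMod 2) (S : Fin n → Matrix (Fin 2) (Fin 2) F),
      (∀ i, Hm (d i) (S i)) → (∑ i, d i) = 0 → mlEval c S = 0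
  · exact commonO c hf heven
  · push_neg at heven
    obtain ⟨d, S, hSh, hd0, hSne⟩ := heven
    have hDg : ∀ T' : Fin n → Matrix (Fin 2) (Fin 2) F,
        (∀ i, Hm (d i) (T' i)) → Dg (mlEval c T') := fun T' hT' => by
      have h3 := mlEval_hm c d T' hT'; rwa [hd0, hm_zero_iff] at h3
    have hpq : ∀ T' : Fin n → Matrix (Fin 2) (Fin 2) F, (∀ i, Hm (d i) (T' i)) →
        mlEval c T' ≠ 0 → mlEval c T' 0 0 ≠ mlEval c T' 1 1 := by
      intro T' hT' hne heq
      have hDgT := hDg T' hT'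
      have hscal : mlEval c T' = mlEval c T' 0 0 • 1 := by
        ext i j
        fin_cases i <;> fin_cases j <;>
          simp [Matrix.smul_apply, Matrix.one_apply, hDgT.1, hDgT.2, heq.symm]
      apply hne
      rw [hscal, hno _ _ hscal, zero_smul]
    have Hyp : ∀ S' : Fin n → Matrix (Fin 2) (Fin 2) F, (∀ i, Hm (d i) (S' i)) →
        mlEval c S' ≠ 0 → ∀ (k : Fin n) (X : Matrix (Fin 2) (Fin 2) F), Hm (d k) X →
        ∃ a : F, mlEval c (Function.update S' k X) = a • mlEval c S' := by
      intro S' hS'h hS'ne k X hX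
      have hpq' := hpq S' hS'h hS'ne
      have hne2 : mlEval c S' 0 0 - mlEval c S' 1 1 ≠ 0 := sub_ne_zero.mpr hpq'
      set t0 : F := (mlEval c (Function.update S' k X) 1 1 -
        mlEval c (Function.update S' k X) 0 0) /
        (mlEval c S' 0 0 - mlEval c S' 1 1) with ht0
      have hcfg : ∀ i, Hm (d i) ((Function.update S' k (X + t0 • S' k)) i) :=
        update_hm hS'h (hm_add hX (hm_smul t0 (hS'h k)))
      have hval : mlEval c (Function.update S' k (X + t0 • S' k)) =
          mlEval c (Function.update S' k X) + t0 • mlEval c S' := mlEval_slot_affine c S' k t0 X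
      have hdiag : mlEval c (Function.update S' k (X + t0 • S' k)) 0 0 =
          mlEval c (Function.update S' k (X + t0 • S' k)) 1 1 := by
        rw [hval]
        simp only [Matrix.add_apply, Matrix.smul_apply, smul_eq_mul]
        rw [ht0]
        field_simp
        ring
      have hVscal : mlEval c (Function.update S' k (X + t0 • S' k)) =
          mlEval c (Function.update S' k (X + t0 • S' k)) 0 0 • 1 := by
        have hDgV := hDg _ hcfg
        ext i j
        fin_cases i <;> fin_cases j <;>
          simp [Matrix.smul_apply, Matrix.one_apply, hDgV.1, hDgV.2, hdiag.symm]
      have hV0 : mlEval c (Function.update S' k (X + t0 • S' k)) = 0 := by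
        rw [hVscal, hno _ _ hVscal, zero_smul]
      rw [hV0] at hval
      refine ⟨-t0, ?_⟩
      rw [neg_smul, eq_neg_iff_add_eq_zero, ← hval]
    obtain ⟨a, ha⟩ := lemL c d Hyp S
      (fun i => ((swapU (F:=F) : (Matrix (Fin 2) (Fin 2) F)ˣ) : Matrix (Fin 2) (Fin 2) F) * S i *
        ((((swapU (F:=F))⁻¹ : (Matrix (Fin 2) (Fin 2) F)ˣ)) : Matrix (Fin 2) (Fin 2) F))
      hSh (fun i => hm_conj_swap (hSh i)) hSne
    rw [mlEval_conj, conj_swap] at ha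
    have e1 : mlEval c S 1 1 = a * mlEval c S 0 0 := by
      have h3 := congrFun (congrFun ha 0) 0; simpa [Matrix.smul_apply] using h3
    have e2 : mlEval c S 0 0 = a * mlEval c S 1 1 := by
      have h3 := congrFun (congrFun ha 1) 1; simpa [Matrix.smul_apply] using h3
    have hpqS := hpq S hSh hSne
    have haa : a * a = 1 := by
      by_cases hp : mlEval c S 0 0 = 0
      · have hq : mlEval c S 1 1 ≠ 0 := fun h => hpqS (by rw [hp, h])
        exact absurd (by rw [e1, hp, mul_zero]) hq
      · have h3 : mlEval c S 0 0 = a * (a * mlEval c S 0 0) := by rw [← e1, ← e2]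
        have h4 : (a * a) * mlEval c S 0 0 = 1 * mlEval c S 0 0 := by linear_combination -h3
        exact mul_right_cancel₀ hp h4
    have ha1 : a = 1 := by
      rcases mul_self_eq_one_iff.mp haa with h | h
      · exact h
      · rw [h]; linear_combination -h2
    apply hpqS
    rw [e2, ha1, one_mul]

lemma conj_conj {R : Type*} [Ring R] (u v : Rˣ) (X : R) :
    ↑(u * v⁻¹) * ((v : R) * X * ↑v⁻¹) * ↑(u * v⁻¹)⁻¹ = (u : R) * X * ↑u⁻¹ := by
  simp only [Units.val_mul, mul_inv_rev, inv_inv, mul_assoc,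
    Units.inv_mul_cancel_left, Units.mul_inv_cancel_left]

lemma nilp_sim (X : Matrix (Fin 2) (Fin 2) F) (hne : X ≠ 0)
    (htr : X 0 0 + X 1 1 = 0) (hdet : X 0 0 * X 1 1 - X 0 1 * X 1 0 = 0) :
    ∃ P : (Matrix (Fin 2) (Fin 2) F)ˣ,
      (P : Matrix (Fin 2) (Fin 2) F) * !![0,1;0,0] *
        ((P⁻¹ : (Matrix (Fin 2) (Fin 2) F)ˣ) : Matrix (Fin 2) (Fin 2) F) = X := by
  have h11 : X 1 1 = -(X 0 0) := by linear_combination htr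
  rw [h11] at hdet
  -- hdet : X 0 0 * -(X 0 0) - X 0 1 * X 1 0 = 0
  by_cases hb : X 0 1 ≠ 0
  · refine ⟨⟨!![X 0 1, 0; -(X 0 0), 1], !![(X 0 1)⁻¹, 0; X 0 0 * (X 0 1)⁻¹, 1], ?_, ?_⟩, ?_⟩
    · rw [Matrix.mul_fin_two, Matrix.one_fin_two]
      ext i j
      fin_cases i <;> fin_cases j <;> (simp; try field_simp; try ring)
    · rw [Matrix.mul_fin_two, Matrix.one_fin_two]
      ext i j
      fin_cases i <;> fin_cases j <;> (simp; try field_simp; try ring)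
    · show !![X 0 1, 0; -(X 0 0), 1] * !![0,1;0,0] * _ = X
      rw [Units.mul_inv_eq_iff_eq_mul]
      show _ = X * (!![X 0 1, 0; -(X 0 0), 1] : Matrix (Fin 2) (Fin 2) F)
      conv_rhs => rw [Matrix.eta_fin_two X]
      rw [Matrix.mul_fin_two, Matrix.mul_fin_two]
      ext i j
      fin_cases i <;> fin_cases j <;> (simp [h11]; try ring) <;>
        first
          | linear_combination hdet
          | linear_combination -hdet
  · push_neg at hb
    have ha : X 0 0 = 0 := by
      have h3 : X 0 0 * X 0 0 = 0 := by rw [hb] at hdet; linear_combination -hdet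
      exact mul_self_eq_zero.mp h3
    have hc : X 1 0 ≠ 0 := by
      intro hc
      apply hne
      ext i j
      fin_cases i <;> fin_cases j <;> simp [ha, hb, hc, h11]
    refine ⟨⟨!![0, 1; X 1 0, 0], !![0, (X 1 0)⁻¹; 1, 0], ?_, ?_⟩, ?_⟩
    · rw [Matrix.mul_fin_two, Matrix.one_fin_two]
      ext i j
      fin_cases i <;> fin_cases j <;> (simp; try field_simp; try ring)
    · rw [Matrix.mul_fin_two, Matrix.one_fin_two]
      ext i j
      fin_cases i <;> fin_cases j <;> (simp; try field_simp; try ring)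
    · show !![0, 1; X 1 0, 0] * !![0,1;0,0] * _ = X
      rw [Units.mul_inv_eq_iff_eq_mul]
      show _ = X * (!![0, 1; X 1 0, 0] : Matrix (Fin 2) (Fin 2) F)
      conv_rhs => rw [Matrix.eta_fin_two X]
      rw [Matrix.mul_fin_two, Matrix.mul_fin_two]
      ext i j
      fin_cases i <;> fin_cases j <;> (simp [ha, hb, h11]; try ring)

lemma diag_sim (h2 : (2:F) ≠ 0) (X : Matrix (Fin 2) (Fin 2) F)
    (htr : X 0 0 + X 1 1 = 0)
    (hdet : X 0 0 * X 1 1 - X 0 1 * X 1 0 ≠ 0) (lam : F)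
    (hlam : lam * lam = X 0 0 * X 0 0 + X 0 1 * X 1 0) :
    ∃ P : (Matrix (Fin 2) (Fin 2) F)ˣ,
      (P : Matrix (Fin 2) (Fin 2) F) * !![lam, 0; 0, -lam] *
        ((P⁻¹ : (Matrix (Fin 2) (Fin 2) F)ˣ) : Matrix (Fin 2) (Fin 2) F) = X := by
  have h11 : X 1 1 = -(X 0 0) := by linear_combination htr
  have hlne : lam ≠ 0 := by
    intro h
    apply hdet
    rw [h11]
    have := hlam
    rw [h] at this
    linear_combination this
  by_cases hb : X 0 1 ≠ 0
  · have hD : -(2 * X 0 1 * lam) ≠ 0 :=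
      neg_ne_zero.mpr (mul_ne_zero (mul_ne_zero h2 hb) hlne)
    refine ⟨⟨!![X 0 1, X 0 1; lam - X 0 0, -lam - X 0 0],
      !![(-lam - X 0 0) / (-(2 * X 0 1 * lam)), -(X 0 1) / (-(2 * X 0 1 * lam));
         (X 0 0 - lam) / (-(2 * X 0 1 * lam)), X 0 1 / (-(2 * X 0 1 * lam))], ?_, ?_⟩, ?_⟩
    · rw [Matrix.mul_fin_two, Matrix.one_fin_two]
      ext i j
      fin_cases i <;> fin_cases j <;> (simp; try field_simp; try ring)
    · rw [Matrix.mul_fin_two, Matrix.one_fin_two]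
      ext i j
      fin_cases i <;> fin_cases j <;> (simp; try field_simp; try ring)
    · show !![X 0 1, X 0 1; lam - X 0 0, -lam - X 0 0] * !![lam, 0; 0, -lam] * _ = X
      rw [Units.mul_inv_eq_iff_eq_mul]
      show _ = X * (!![X 0 1, X 0 1; lam - X 0 0, -lam - X 0 0] : Matrix (Fin 2) (Fin 2) F)
      conv_rhs => rw [Matrix.eta_fin_two X]
      rw [Matrix.mul_fin_two, Matrix.mul_fin_two]
      ext i j
      fin_cases i <;> fin_cases j <;> (simp [h11]; try ring) <;>
        first
          | linear_combination hlam
          | linear_combination -hlam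
  · push_neg at hb
    have ha : X 0 0 ≠ 0 := by
      intro h
      apply hdet
      rw [h11, h, hb]
      ring
    have hl2 : (lam - X 0 0) * (lam + X 0 0) = 0 := by
      rw [hb] at hlam
      linear_combination hlam
    rcases mul_eq_zero.mp hl2 with hl | hl
    · -- lam = X 0 0
      have hle : lam = X 0 0 := by linear_combination hl
      refine ⟨⟨!![2 * X 0 0, 0; X 1 0, 1], !![(2 * X 0 0)⁻¹, 0; -(X 1 0) * (2 * X 0 0)⁻¹, 1],
        ?_, ?_⟩, ?_⟩
      · rw [Matrix.mul_fin_two, Matrix.one_fin_two]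
        ext i j
        fin_cases i <;> fin_cases j <;> (simp; try field_simp; try ring)
      · rw [Matrix.mul_fin_two, Matrix.one_fin_two]
        ext i j
        fin_cases i <;> fin_cases j <;> (simp; try field_simp; try ring)
      · show !![2 * X 0 0, 0; X 1 0, 1] * !![lam, 0; 0, -lam] * _ = X
        rw [Units.mul_inv_eq_iff_eq_mul]
        show _ = X * (!![2 * X 0 0, 0; X 1 0, 1] : Matrix (Fin 2) (Fin 2) F)
        conv_rhs => rw [Matrix.eta_fin_two X]
        rw [Matrix.mul_fin_two, Matrix.mul_fin_two]
        ext i j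
        fin_cases i <;> fin_cases j <;> (simp [hb, h11, hle]; try ring)
    · -- lam = -(X 0 0)
      have hle : lam = -(X 0 0) := by linear_combination hl
      refine ⟨⟨!![0, 2 * X 0 0; 1, X 1 0], !![-(X 1 0) * (2 * X 0 0)⁻¹, 1; (2 * X 0 0)⁻¹, 0],
        ?_, ?_⟩, ?_⟩
      · rw [Matrix.mul_fin_two, Matrix.one_fin_two]
        ext i j
        fin_cases i <;> fin_cases j <;> (simp; try field_simp; try ring)
      · rw [Matrix.mul_fin_two, Matrix.one_fin_two]
        ext i j
        fin_cases i <;> fin_cases j <;> (simp; try field_simp; try ring)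
      · show !![0, 2 * X 0 0; 1, X 1 0] * !![lam, 0; 0, -lam] * _ = X
        rw [Units.mul_inv_eq_iff_eq_mul]
        show _ = X * (!![0, 2 * X 0 0; 1, X 1 0] : Matrix (Fin 2) (Fin 2) F)
        conv_rhs => rw [Matrix.eta_fin_two X]
        rw [Matrix.mul_fin_two, Matrix.mul_fin_two]
        ext i j
        fin_cases i <;> fin_cases j <;> (simp [hb, h11, hle]; try ring)
end

/-- Let `F` be an algebraically closed field and `f(x_1,…,x_n)` a multilinear polynomial
over `F` that is non-central over `M_2(F)`. Then every trace-zero matrix `A ∈ M_2(F)` is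
a value of `f`. -/
theorem traceZero_mem_image_of_noncentral_multilinear
    {F : Type*} [Field F] [IsAlgClosed F]
    {n : ℕ} (c : Equiv.Perm (Fin n) → F)
    (hf : ¬ ∀ T : Fin n → Matrix (Fin 2) (Fin 2) F, ∃ a : F,
      mlEval c T = a • (1 : Matrix (Fin 2) (Fin 2) F))
    (A : Matrix (Fin 2) (Fin 2) F) (hA : A.trace = 0) :
    ∃ T : Fin n → Matrix (Fin 2) (Fin 2) F, mlEval c T = A := by
  classical
  rcases Nat.eq_zero_or_pos n with hn0 | hn
  · exfalso
    apply hf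
    intro T
    refine ⟨c 1, ?_⟩
    subst hn0
    rw [mlEval, Finset.sum_eq_single_of_mem 1 (Finset.mem_univ _)
      (fun σ _ hσ => absurd (Equiv.ext fun i => i.elim0) hσ)]
    simp
  have htrA : A 0 0 + A 1 1 = 0 := by rwa [Matrix.trace_fin_two] at hA
  set i0 : Fin n := ⟨0, hn⟩ with hi0
  by_cases hdet : A 0 0 * A 1 1 - A 0 1 * A 1 0 = 0
  · by_cases hA0 : A = 0
    · exact ⟨fun _ => 0, by rw [mlEval_zero c hn]; exact hA0.symm⟩
    · obtain ⟨T0, hne, htr0, hdet0⟩ := exists_nilp_value c hf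
      obtain ⟨Pn, hPn⟩ := nilp_sim (mlEval c T0) hne htr0 hdet0
      obtain ⟨Pa, hPa⟩ := nilp_sim A hA0 htrA hdet
      refine ⟨fun i => ((Pa * Pn⁻¹ : (Matrix (Fin 2) (Fin 2) F)ˣ) : Matrix (Fin 2) (Fin 2) F)
        * T0 i * (((Pa * Pn⁻¹)⁻¹ : (Matrix (Fin 2) (Fin 2) F)ˣ) : Matrix (Fin 2) (Fin 2) F), ?_⟩
      rw [mlEval_conj, ← hPn, conj_conj, hPa]
  · by_cases h2 : (2 : F) = 0
    · by_cases hAs : ∃ s : F, A = s • (1 : Matrix (Fin 2) (Fin 2) F)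
      · obtain ⟨s0, hs0A⟩ := hAs
        have hs0 : s0 ≠ 0 := by
          intro h
          rw [h, zero_smul] at hs0A
          apply hdet
          rw [hs0A]
          simp
        obtain ⟨T0, s, hT0, hs⟩ := exists_scalar_value c h2 hf
        refine ⟨Function.update T0 i0 ((s0 / s) • T0 i0), ?_⟩
        rw [mlEval_slot_smul, Function.update_eq_self, hT0, smul_smul,
          div_mul_cancel₀ s0 hs, hs0A]
      · push_neg at hAs
        obtain ⟨T0, htrV, hdetV, hVns⟩ := exists_split_value c hf
        obtain ⟨μ, hμ'⟩ := IsAlgClosed.exists_pow_nat_eq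
          (mlEval c T0 0 0 * mlEval c T0 0 0 + mlEval c T0 0 1 * mlEval c T0 1 0)
          (n := 2) (by norm_num)
        rw [pow_two] at hμ'
        have hμ0 : μ ≠ 0 := by
          intro h
          rw [h] at hμ'
          apply hdetV
          have h11V : mlEval c T0 1 1 = -(mlEval c T0 0 0) := by linear_combination htrV
          rw [h11V]
          linear_combination hμ'
        obtain ⟨ν, hν'⟩ := IsAlgClosed.exists_pow_nat_eq
          (A 0 0 * A 0 0 + A 0 1 * A 1 0) (n := 2) (by norm_num)
        rw [pow_two] at hν'
        have hν0 : ν ≠ 0 := by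
          intro h
          rw [h] at hν'
          apply hdet
          have h11A : A 1 1 = -(A 0 0) := by linear_combination htrA
          rw [h11A]
          linear_combination hν'
        set s : F := ν / μ with hsdef
        have hsμ : s * μ = ν := div_mul_cancel₀ ν hμ0
        have hW : mlEval c (Function.update T0 i0 (s • T0 i0)) = s • mlEval c T0 := by
          rw [mlEval_slot_smul, Function.update_eq_self]
        set N : Matrix (Fin 2) (Fin 2) F := s • mlEval c T0 - ν • 1 with hN
        have eN00 : N 0 0 = s * mlEval c T0 0 0 - ν := by
          simp [hN, Matrix.sub_apply, Matrix.smul_apply, Matrix.one_apply]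
        have eN01 : N 0 1 = s * mlEval c T0 0 1 := by
          simp [hN, Matrix.sub_apply, Matrix.smul_apply, Matrix.one_apply]
        have eN10 : N 1 0 = s * mlEval c T0 1 0 := by
          simp [hN, Matrix.sub_apply, Matrix.smul_apply, Matrix.one_apply]
        have eN11 : N 1 1 = s * mlEval c T0 1 1 - ν := by
          simp [hN, Matrix.sub_apply, Matrix.smul_apply, Matrix.one_apply]
        have hNne : N ≠ 0 := by
          intro h
          apply hVns μ
          rw [hN, sub_eq_zero] at h
          have h4 := congrArg (fun Z : Matrix (Fin 2) (Fin 2) F => (μ / ν) • Z) h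
          simp only [smul_smul] at h4
          have e5 : (μ / ν) * s = 1 := by rw [hsdef]; field_simp
          have e6 : (μ / ν) * ν = μ := div_mul_cancel₀ μ hν0
          rwa [e5, e6, one_smul] at h4
        have hNtr : N 0 0 + N 1 1 = 0 := by
          rw [eN00, eN11]
          linear_combination s * htrV - ν * h2
        have hNdet : N 0 0 * N 1 1 - N 0 1 * N 1 0 = 0 := by
          rw [eN00, eN11, eN01, eN10]
          linear_combination (s * s * mlEval c T0 0 0 - s * ν) * htrV + (s * s) * hμ' -
            (s * μ + ν) * hsμ
        have hMne : A - ν • 1 ≠ 0 := by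
          intro h
          exact hAs ν (sub_eq_zero.mp h)
        have eM00 : (A - ν • (1 : Matrix (Fin 2) (Fin 2) F)) 0 0 = A 0 0 - ν := by
          simp [Matrix.sub_apply, Matrix.smul_apply, Matrix.one_apply]
        have eM01 : (A - ν • (1 : Matrix (Fin 2) (Fin 2) F)) 0 1 = A 0 1 := by
          simp [Matrix.sub_apply, Matrix.smul_apply, Matrix.one_apply]
        have eM10 : (A - ν • (1 : Matrix (Fin 2) (Fin 2) F)) 1 0 = A 1 0 := by
          simp [Matrix.sub_apply, Matrix.smul_apply, Matrix.one_apply]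
        have eM11 : (A - ν • (1 : Matrix (Fin 2) (Fin 2) F)) 1 1 = A 1 1 - ν := by
          simp [Matrix.sub_apply, Matrix.smul_apply, Matrix.one_apply]
        have hMtr : (A - ν • (1 : Matrix (Fin 2) (Fin 2) F)) 0 0 +
            (A - ν • (1 : Matrix (Fin 2) (Fin 2) F)) 1 1 = 0 := by
          rw [eM00, eM11]
          linear_combination htrA - ν * h2
        have hMdet : (A - ν • (1 : Matrix (Fin 2) (Fin 2) F)) 0 0 *
              (A - ν • (1 : Matrix (Fin 2) (Fin 2) F)) 1 1 -
            (A - ν • (1 : Matrix (Fin 2) (Fin 2) F)) 0 1 *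
              (A - ν • (1 : Matrix (Fin 2) (Fin 2) F)) 1 0 = 0 := by
          rw [eM00, eM11, eM01, eM10]
          linear_combination (A 0 0 - ν) * htrA + hν'
        obtain ⟨Pn, hPn⟩ := nilp_sim N hNne hNtr hNdet
        obtain ⟨Pm, hPm⟩ := nilp_sim (A - ν • 1) hMne hMtr hMdet
        refine ⟨fun i => ((Pm * Pn⁻¹ : (Matrix (Fin 2) (Fin 2) F)ˣ) : Matrix (Fin 2) (Fin 2) F)
          * (Function.update T0 i0 (s • T0 i0)) i *
          (((Pm * Pn⁻¹)⁻¹ : (Matrix (Fin 2) (Fin 2) F)ˣ) : Matrix (Fin 2) (Fin 2) F), ?_⟩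
        rw [mlEval_conj, hW]
        have hWN : s • mlEval c T0 = N + ν • 1 := by rw [hN]; abel
        rw [hWN, mul_add, add_mul, ← hPn, conj_conj, hPm, mul_smul_comm, mul_one,
          smul_mul_assoc, Units.mul_inv]
        abel
    · -- characteristic ≠ 2
      obtain ⟨T0, htrV, hdetV, hVns⟩ := exists_split_value c hf
      obtain ⟨μ, hμ'⟩ := IsAlgClosed.exists_pow_nat_eq
        (mlEval c T0 0 0 * mlEval c T0 0 0 + mlEval c T0 0 1 * mlEval c T0 1 0)
        (n := 2) (by norm_num)
      rw [pow_two] at hμ'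
      have hμ0 : μ ≠ 0 := by
        intro h
        rw [h] at hμ'
        apply hdetV
        have h11V : mlEval c T0 1 1 = -(mlEval c T0 0 0) := by linear_combination htrV
        rw [h11V]
        linear_combination hμ'
      obtain ⟨lam, hlam'⟩ := IsAlgClosed.exists_pow_nat_eq
        (A 0 0 * A 0 0 + A 0 1 * A 1 0) (n := 2) (by norm_num)
      rw [pow_two] at hlam'
      obtain ⟨Pa, hPa⟩ := diag_sim h2 A htrA hdet lam hlam'
      obtain ⟨Pv, hPv⟩ := diag_sim h2 (mlEval c T0) htrV hdetV μ hμ'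
      refine ⟨fun i => ((Pa * Pv⁻¹ : (Matrix (Fin 2) (Fin 2) F)ˣ) : Matrix (Fin 2) (Fin 2) F)
        * (Function.update T0 i0 ((lam / μ) • T0 i0)) i *
        (((Pa * Pv⁻¹)⁻¹ : (Matrix (Fin 2) (Fin 2) F)ˣ) : Matrix (Fin 2) (Fin 2) F), ?_⟩
      rw [mlEval_conj, mlEval_slot_smul, Function.update_eq_self, ← hPv,
        mul_smul_comm, smul_mul_assoc, conj_conj]
      have hDD : (lam / μ) • (!![μ, 0; 0, -μ] : Matrix (Fin 2) (Fin 2) F) =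
          !![lam, 0; 0, -lam] := by
        ext i j
        fin_cases i <;> fin_cases j <;> (simp; try field_simp)
      have e2 : (lam / μ) • ((Pa : Matrix (Fin 2) (Fin 2) F) * !![μ, 0; 0, -μ] *
            ((Pa⁻¹ : (Matrix (Fin 2) (Fin 2) F)ˣ) : Matrix (Fin 2) (Fin 2) F)) =
          (Pa : Matrix (Fin 2) (Fin 2) F) * ((lam / μ) • !![μ, 0; 0, -μ]) *
            ((Pa⁻¹ : (Matrix (Fin 2) (Fin 2) F)ˣ) : Matrix (Fin 2) (Fin 2) F) := by
        rw [mul_smul_comm, smul_mul_assoc]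
      rw [e2, hDD, hPa]
end

section
/- Let F be a field, let m ≥ 2, and let P_m be the block-diagonal matrix defined below. Then P_m ∈ M_m(F) is algebraic of degree exactly m over F, that is, its minimal polynomial over F has degree m. -/
/-- The block-diagonal matrix `P_m = diag(A_1,…,A_s)` (with an extra `1×1` zero block when
`m` is odd), where `s = ⌊m/2⌋` and `A_i = [[a_i, 1], [0, -a_i]]`. Rows `2k, 2k+1` carry the
block `A_{k+1}`. -/
def Pmat {F : Type*} [Field F] (m : ℕ) (a : Fin (m / 2) → F) :
    Matrix (Fin m) (Fin m) F :=
  Matrix.of fun i j =>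
    if h : i.val / 2 < m / 2 then
      if i = j then (if i.val % 2 = 0 then a ⟨i.val / 2, h⟩ else -a ⟨i.val / 2, h⟩)
      else if j.val = i.val + 1 ∧ i.val % 2 = 0 then 1 else 0
    else 0

open Polynomial Matrix

private def emb (m : ℕ) (i : Fin (m / 2)) (j : Fin 2) : Fin m :=
  ⟨2 * i.val + j.val, by have := i.isLt; have := j.isLt; omega⟩

private lemma emb_ne {m : ℕ} (i : Fin (m / 2)) : emb m i 0 ≠ emb m i 1 := by
  simp [emb, Fin.ext_iff]

private lemma Pmat_emb_apply {F : Type*} [Field F] (m : ℕ) (a : Fin (m / 2) → F)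
    (i : Fin (m / 2)) (r : Fin 2) (k : Fin m) :
    Pmat m a (emb m i r) k =
      if k = emb m i 0 then (if r = 0 then a i else 0)
      else if k = emb m i 1 then (if r = 0 then 1 else -a i) else 0 := by
  have hi := i.isLt
  obtain ⟨rv, hrv⟩ := r
  simp only [Pmat, Matrix.of_apply, emb, Fin.ext_iff] at *
  interval_cases rv <;>
    split_ifs <;>
      first
        | rfl
        | omega
        | (exact congrArg a (Fin.ext (by simp only [Fin.val_mk]; omega)))
        | (exact congrArg (fun x => -a x) (Fin.ext (by simp only [Fin.val_mk]; omega)))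
        | simp_all

private lemma mul_submatrix {F : Type*} [Field F] (m : ℕ) (a : Fin (m / 2) → F)
    (i : Fin (m / 2)) (X : Matrix (Fin m) (Fin m) F) :
    (Pmat m a * X).submatrix (emb m i) (emb m i) =
      !![a i, 1; 0, -a i] * X.submatrix (emb m i) (emb m i) := by
  ext r c
  simp only [Matrix.submatrix_apply, Matrix.mul_apply]
  have hzero : ∀ k ∈ Finset.univ, k ∉ ({emb m i 0, emb m i 1} : Finset (Fin m)) →
      Pmat m a (emb m i r) k * X k (emb m i c) = 0 := by
    intro k _ hk
    simp only [Finset.mem_insert, Finset.mem_singleton, not_or] at hk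
    rw [Pmat_emb_apply, if_neg hk.1, if_neg hk.2, zero_mul]
  rw [← Finset.sum_subset (Finset.subset_univ _) hzero, Finset.sum_pair (emb_ne i)]
  rw [Pmat_emb_apply, Pmat_emb_apply, if_pos rfl,
    if_neg (show emb m i 1 ≠ emb m i 0 from (emb_ne i).symm), if_pos rfl]
  fin_cases r <;> simp

private lemma pow_submatrix {F : Type*} [Field F] (m : ℕ) (a : Fin (m / 2) → F)
    (i : Fin (m / 2)) (n : ℕ) :
    ((Pmat m a) ^ n).submatrix (emb m i) (emb m i) = (!![a i, 1; 0, -a i]) ^ n := by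
  induction n with
  | zero =>
      simp only [pow_zero]
      ext r c
      simp only [Matrix.submatrix_apply, Matrix.one_apply]
      have : emb m i r = emb m i c ↔ r = c := by
        constructor
        · intro h
          have := congrArg Fin.val h
          simp only [emb, Fin.val_mk] at this
          exact Fin.ext (by omega)
        · intro h; rw [h]
      simp [this]
  | succ n ih => rw [pow_succ', pow_succ', mul_submatrix, ih]

private lemma aeval_submatrix {F : Type*} [Field F] (m : ℕ) (a : Fin (m / 2) → F)
    (i : Fin (m / 2)) (p : F[X]) :
    (Polynomial.aeval (Pmat m a) p).submatrix (emb m i) (emb m i) =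
      Polynomial.aeval (!![a i, 1; 0, -a i]) p := by
  induction p using Polynomial.induction_on' with
  | add p q hp hq => simp only [map_add, Matrix.submatrix_add, Pi.add_apply, hp, hq]
  | monomial n c =>
      rw [Polynomial.aeval_monomial, Polynomial.aeval_monomial,
        Algebra.algebraMap_eq_smul_one, Algebra.algebraMap_eq_smul_one,
        smul_mul_assoc, smul_mul_assoc, one_mul, one_mul, ← pow_submatrix m a i n]
      ext r c
      simp

private lemma quad_dvd_of_aeval_eq_zero {F : Type*} [Field F] (c : F) (q : F[X])
    (hq : Polynomial.aeval (!![c, 1; 0, -c]) q = 0) :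
    X ^ 2 - C (c ^ 2) ∣ q := by
  set A : Matrix (Fin 2) (Fin 2) F := !![c, 1; 0, -c] with hA
  have hA2 : A * A = (c ^ 2) • (1 : Matrix (Fin 2) (Fin 2) F) := by
    ext r s
    fin_cases r <;> fin_cases s <;>
      simp [hA, Matrix.mul_apply, Fin.sum_univ_two, Matrix.one_apply] <;> ring
  have hann : Polynomial.aeval A (X ^ 2 - C (c ^ 2)) = 0 := by
    rw [map_sub, Polynomial.aeval_X_pow, Polynomial.aeval_C, pow_two, hA2,
      Algebra.algebraMap_eq_smul_one, sub_self]
  have hmon : (X ^ 2 - C (c ^ 2) : F[X]).Monic := monic_X_pow_sub_C _ two_ne_zero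
  have hint : IsIntegral F A := ⟨_, hmon, hann⟩
  have hdvd : minpoly F A ∣ X ^ 2 - C (c ^ 2) := minpoly.dvd F A hann
  have hle : (minpoly F A).natDegree ≤ 2 := by
    have := Polynomial.natDegree_le_of_dvd hdvd hmon.ne_zero
    rwa [natDegree_X_pow_sub_C] at this
  have hge : 2 ≤ (minpoly F A).natDegree := by
    by_contra h
    push_neg at h
    have h1 : (minpoly F A).natDegree = 1 :=
      le_antisymm (by omega) (minpoly.natDegree_pos hint)
    have heq := (minpoly.monic hint).eq_X_add_C h1
    have := minpoly.aeval F A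
    rw [heq, map_add, Polynomial.aeval_X, Polynomial.aeval_C,
      Algebra.algebraMap_eq_smul_one] at this
    have h01 := congrFun (congrFun this 0) 1
    simp [hA, Matrix.one_apply] at h01
  have hminp : minpoly F A = X ^ 2 - C (c ^ 2) := by
    refine Polynomial.eq_of_monic_of_associated (minpoly.monic hint) hmon ?_
    exact Polynomial.associated_of_dvd_of_natDegree_le hdvd hmon.ne_zero (by
      rw [natDegree_X_pow_sub_C]; omega)
  rw [← hminp]
  exact minpoly.dvd F A hq

private lemma aeval_mulVec_kernel {F : Type*} [Field F] {n : Type*} [Fintype n]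
    [DecidableEq n] (P : Matrix n n F) (v : n → F) (hv : P *ᵥ v = 0) (p : F[X]) :
    (Polynomial.aeval P p) *ᵥ v = p.eval 0 • v := by
  have hpow : ∀ k : ℕ, (P ^ k) *ᵥ v = if k = 0 then v else 0 := by
    intro k
    cases k with
    | zero => simp [Matrix.one_mulVec]
    | succ k =>
        rw [pow_succ, ← Matrix.mulVec_mulVec, hv, Matrix.mulVec_zero]
        simp
  induction p using Polynomial.induction_on' with
  | add p q hp hq => rw [map_add, Matrix.add_mulVec, hp, hq, Polynomial.eval_add, add_smul]
  | monomial k c =>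
      rw [Polynomial.aeval_monomial, Algebra.algebraMap_eq_smul_one, smul_mul_assoc, one_mul,
        Matrix.smul_mulVec, hpow, Polynomial.eval_monomial]
      cases k with
      | zero => simp
      | succ k => simp

/-- Let `F` be a field and `m ≥ 2`. The matrix `P_m` is algebraic of degree exactly `m`
over `F`, i.e. its minimal polynomial over `F` has degree `m`. -/
theorem Pmat_minpoly_natDegree
    {F : Type*} [Field F] (m : ℕ) (hm : 2 ≤ m) (a : Fin (m / 2) → F)
    (ha0 : ∀ i, a i ≠ 0)
    (ha : ∀ i j, i ≠ j → a i ≠ a j ∧ a i ≠ -a j) :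
    (minpoly F (Pmat m a)).natDegree = m := by
  set P := Pmat m a with hP
  have hint : IsIntegral F P := ⟨P.charpoly, P.charpoly_monic, P.aeval_self_charpoly⟩
  set q := minpoly F P with hqdef
  have hq0 : q ≠ 0 := minpoly.ne_zero hint
  have hupper : q.natDegree ≤ m := by
    have hd := Polynomial.natDegree_le_of_dvd (minpoly.dvd F P P.aeval_self_charpoly)
      P.charpoly_monic.ne_zero
    rwa [Matrix.charpoly_natDegree_eq_dim, Fintype.card_fin] at hd
  set g : Fin (m / 2) → F[X] := fun i => X ^ 2 - C (a i ^ 2) with hg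
  have hgd : ∀ i, g i ∣ q := by
    intro i
    apply quad_dvd_of_aeval_eq_zero
    have h := aeval_submatrix m a i q
    rw [← hP, minpoly.aeval] at h
    simpa using h.symm
  have hmono : ∀ i, (g i).Monic := fun i => monic_X_pow_sub_C _ two_ne_zero
  have hgdeg : ∀ i, (g i).natDegree = 2 := fun i => natDegree_X_pow_sub_C
  have hsq : ∀ i j, i ≠ j → a i ^ 2 ≠ a j ^ 2 := by
    intro i j hij h
    have hmul : (a i - a j) * (a i + a j) = 0 := by linear_combination h
    rcases mul_eq_zero.mp hmul with h' | h'
    · exact (ha i j hij).1 (sub_eq_zero.mp h')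
    · exact (ha i j hij).2 (eq_neg_of_add_eq_zero_left h')
  have hcop : ((Finset.univ : Finset (Fin (m / 2))) : Set (Fin (m / 2))).Pairwise (Function.onFun IsCoprime g) := by
    intro i _ j _ hij
    have hc : a j ^ 2 - a i ^ 2 ≠ 0 := sub_ne_zero.mpr (Ne.symm (hsq i j hij))
    refine ⟨C (a j ^ 2 - a i ^ 2)⁻¹, -C (a j ^ 2 - a i ^ 2)⁻¹, ?_⟩
    have hdiff : g i - g j = C (a j ^ 2 - a i ^ 2) := by
      rw [hg]; simp only [map_sub]; ring
    calc C (a j ^ 2 - a i ^ 2)⁻¹ * g i + -C (a j ^ 2 - a i ^ 2)⁻¹ * g j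
        = C (a j ^ 2 - a i ^ 2)⁻¹ * (g i - g j) := by ring
      _ = C (a j ^ 2 - a i ^ 2)⁻¹ * C (a j ^ 2 - a i ^ 2) := by rw [hdiff]
      _ = 1 := by rw [← C_mul, inv_mul_cancel₀ hc, C_1]
  have hproddvd : ∏ i, g i ∣ q := Finset.prod_dvd_of_coprime hcop fun i _ => hgd i
  have hproddeg : (∏ i, g i).natDegree = m / 2 * 2 := by
    rw [Polynomial.natDegree_prod _ _ fun i _ => (hmono i).ne_zero]
    simp [hgdeg, Finset.sum_const, Finset.card_univ, mul_comm]
  rcases Nat.even_or_odd m with he | ho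
  · have hm2 : m % 2 = 0 := Nat.even_iff.mp he
    have hd := Polynomial.natDegree_le_of_dvd hproddvd hq0
    omega
  · have hm2 : m % 2 = 1 := Nat.odd_iff.mp ho
    have hlast : ∀ idx : Fin m, Pmat m a idx ⟨m - 1, by omega⟩ = 0 := by
      intro idx
      have hio := idx.isLt
      simp only [Pmat, Matrix.of_apply, Fin.ext_iff]
      split_ifs <;> first | rfl | (exfalso; omega)
    have hcol : P *ᵥ Pi.single (⟨m - 1, by omega⟩ : Fin m) 1 = 0 := by
      rw [hP, Matrix.mulVec_single]
      ext idx
      simp [hlast]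
    have hX : X ∣ q := by
      have h := aeval_mulVec_kernel P _ hcol q
      have h0 : Polynomial.aeval P q = 0 := minpoly.aeval F P
      rw [h0, Matrix.zero_mulVec] at h
      have h2 := congrFun h.symm ⟨m - 1, by omega⟩
      simp [Pi.single_apply] at h2
      rw [Polynomial.X_dvd_iff, Polynomial.coeff_zero_eq_eval_zero]
      exact h2
    have hcopX : IsCoprime (∏ i, g i) X := by
      refine IsCoprime.prod_left fun i _ => ⟨-C (a i ^ 2)⁻¹, C (a i ^ 2)⁻¹ * X, ?_⟩
      have hc : a i ^ 2 ≠ 0 := pow_ne_zero _ (ha0 i)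
      have hdiff : X * X - g i = C (a i ^ 2) := by rw [hg]; ring
      calc -C (a i ^ 2)⁻¹ * g i + C (a i ^ 2)⁻¹ * X * X
          = C (a i ^ 2)⁻¹ * (X * X - g i) := by ring
        _ = C (a i ^ 2)⁻¹ * C (a i ^ 2) := by rw [hdiff]
        _ = 1 := by rw [← C_mul, inv_mul_cancel₀ hc, C_1]
    have hdvd : (∏ i, g i) * X ∣ q := hcopX.mul_dvd hproddvd hX
    have hd := Polynomial.natDegree_le_of_dvd hdvd hq0
    rw [Polynomial.natDegree_mul (Polynomial.monic_prod_of_monic _ _ fun i _ =>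
      hmono i).ne_zero Polynomial.X_ne_zero, Polynomial.natDegree_X, hproddeg] at hd
    omega
end

section
/- Let D be a division ring with center F, let r and n be positive integers, and let a ∈ M_r(D). Then a is algebraic over F of degree at most n (i.e., there is a nonzero polynomial over F of degree at most n annihilating a) if and only if g_n(a, r_1, r_2, …, r_n) = 0 for all r_1, …, r_n ∈ M_r(D). -/
/-- The expression `g_n(x, x_1, …, x_n) = ∑_{σ ∈ S_{n+1}} sign(σ) • x^{σ(0)} x_1 x^{σ(1)}
x_2 ⋯ x_n x^{σ(n)}`, where `S_{n+1}` is the symmetric group on `{0, 1, …, n}`. -/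
def gPoly {R : Type*} [Ring R] (n : ℕ) (x : R) (r : Fin n → R) : R :=
  ∑ σ : Equiv.Perm (Fin (n + 1)),
    ((Equiv.Perm.sign σ : ℤˣ) : ℤ) •
      (x ^ ((σ 0 : Fin (n + 1)) : ℕ) *
        (List.ofFn fun i : Fin n => r i * x ^ ((σ i.succ : Fin (n + 1)) : ℕ)).prod)

open scoped TensorProduct

/-- The analogue of `gPoly` with a general family `y` in place of powers of `x`. -/
def hPoly {A : Type*} [Ring A] (n : ℕ) (y : Fin (n + 1) → A) (r : Fin n → A) : A :=
  ∑ σ : Equiv.Perm (Fin (n + 1)),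
    ((Equiv.Perm.sign σ : ℤˣ) : ℤ) •
      (y (σ 0) * (List.ofFn fun i : Fin n => r i * y (σ i.succ)).prod)

theorem gPoly_eq_hPoly {A : Type*} [Ring A] (n : ℕ) (x : A) (rs : Fin n → A) :
    gPoly n x rs = hPoly n (fun k : Fin (n + 1) => x ^ (k : ℕ)) rs := rfl

section Forward

variable {F A : Type*} [Field F] [Ring A] [Algebra F A]

theorem hPoly_eq_zero_of_not_linearIndependent {n : ℕ} {y : Fin (n + 1) → A}
    (h : ¬ LinearIndependent F y) (rs : Fin n → A) : hPoly n y rs = 0 := by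
  classical
  haveI : NoZeroSMulDivisors F A := by
    refine ⟨fun {c x} hcx => ?_⟩
    by_cases hc : c = 0
    · exact Or.inl hc
    · exact Or.inr (by
        have := congrArg (fun z => c⁻¹ • z) hcx
        simpa [smul_smul, inv_mul_cancel₀ hc] using this)
  let L : (i : Fin (n + 1)) → A →ₗ[F] A :=
    Fin.cases LinearMap.id (fun i => LinearMap.mulLeft F (rs i))
  let P : MultilinearMap F (fun _ : Fin (n + 1) => A) A :=
    (MultilinearMap.mkPiAlgebraFin F (n + 1) A).compLinearMap L
  have key : hPoly n y rs = MultilinearMap.alternatization P y := by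
    rw [MultilinearMap.alternatization_apply]
    refine Finset.sum_congr rfl fun σ _ => ?_
    rw [MultilinearMap.domDomCongr_apply, MultilinearMap.compLinearMap_apply,
      MultilinearMap.mkPiAlgebraFin_apply, Units.smul_def]
    congr 1
    rw [List.ofFn_succ, List.prod_cons]
    simp [L]
  rw [key]
  exact AlternatingMap.map_linearDependent _ y h

end Forward

theorem hPoly_succ {A : Type*} [Ring A] (m : ℕ) (y : Fin (m + 2) → A) (rs : Fin (m + 1) → A) :
    hPoly (m + 1) y rs = ∑ p : Fin (m + 2), (if p = 0 then (1 : ℤ) else -1) •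
      (y p * (rs 0 * hPoly m (fun j => y (Equiv.swap 0 p j.succ)) (fun i => rs i.succ))) := by
  classical
  rw [hPoly, ← Equiv.sum_comp (Equiv.Perm.decomposeFin.symm :
      Fin (m + 2) × Equiv.Perm (Fin (m + 1)) ≃ Equiv.Perm (Fin (m + 2)))]
  rw [Fintype.sum_prod_type]
  refine Finset.sum_congr rfl fun p _ => ?_
  rw [hPoly, Finset.mul_sum, Finset.mul_sum, Finset.smul_sum]
  refine Finset.sum_congr rfl fun e _ => ?_
  rw [Equiv.Perm.decomposeFin.symm_sign, Equiv.Perm.decomposeFin_symm_apply_zero]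
  have hlist : (List.ofFn fun i : Fin (m + 1) =>
      rs i * y (Equiv.Perm.decomposeFin.symm (p, e) i.succ)).prod
      = (rs 0 * y (Equiv.swap 0 p (e 0).succ)) *
        (List.ofFn fun i : Fin m =>
          rs i.succ * y (Equiv.swap 0 p (e i.succ).succ)).prod := by
    rw [List.ofFn_succ, List.prod_cons]
    simp [Equiv.Perm.decomposeFin_symm_apply_succ]
  rw [hlist]
  simp only [mul_smul_comm, smul_smul, Units.val_mul, apply_ite (fun u : ℤˣ => ((u : ℤ))),
    Units.val_one, Units.val_neg, mul_assoc]

section Density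

variable {F A : Type*} [Field F] [Ring A] [Algebra F A]

/-- Right multiplication as an algebra hom from the opposite algebra to endomorphisms. -/
noncomputable def rmulAlgHom (F A : Type*) [CommSemiring F] [Semiring A] [Algebra F A] :
    Aᵐᵒᵖ →ₐ[F] Module.End F A where
  toFun b := LinearMap.mulRight F b.unop
  map_one' := by ext x; simp
  map_mul' b c := by ext x; simp [mul_assoc]
  map_zero' := by ext x; simp
  map_add' b c := by ext x; simp [mul_add]
  commutes' c := by
    ext x
    simp [Module.algebraMap_end_apply, Algebra.commutes, Algebra.smul_def]

theorem density [Nontrivial A] [IsSimpleRing A]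
    (hcent : Set.center A ⊆ Set.range (algebraMap F A))
    {m : ℕ} {y : Fin (m + 1) → A} (hy : LinearIndependent F y) :
    ∃ s : Finset (A × Aᵐᵒᵖ), ∀ p : Fin (m + 1),
      (∑ j ∈ s, j.1 * (y p * j.2.unop)) = if p = 0 then 1 else 0 := by
  classical
  -- the multiplication representation of `A ⊗ Aᵐᵒᵖ` on `A`
  let Φ : (A ⊗[F] Aᵐᵒᵖ) →ₐ[F] Module.End F A :=
    Algebra.TensorProduct.lift (Algebra.lmul F A) (rmulAlgHom F A)
      (fun a b => by ext x; simp [rmulAlgHom, mul_assoc])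
  letI : Module (A ⊗[F] Aᵐᵒᵖ) A := Module.compHom A Φ.toRingHom
  have hsmul : ∀ (t : A ⊗[F] Aᵐᵒᵖ) (x : A), t • x = Φ t x := fun _ _ => rfl
  have htmul : ∀ (a : A) (b : Aᵐᵒᵖ) (x : A), (a ⊗ₜ[F] b) • x = a * (x * b.unop) := by
    intro a b x
    rw [hsmul]
    simp [Φ, Algebra.TensorProduct.lift_tmul, Module.End.mul_apply, rmulAlgHom]
  -- A is a simple module over `A ⊗ Aᵐᵒᵖ`
  haveI hsimple : IsSimpleModule (A ⊗[F] Aᵐᵒᵖ) A := by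
    refine (isSimpleModule_iff ..).mpr ⟨?_⟩
    intro N
    let I : TwoSidedIdeal A := TwoSidedIdeal.mk' N (N.zero_mem) (fun ha hb => N.add_mem ha hb)
      (fun {x} hx => N.neg_mem hx)
      (fun {x z} hz => by
        have := N.smul_mem (x ⊗ₜ[F] (1 : Aᵐᵒᵖ)) hz
        simpa [htmul] using this)
      (fun {z x} hz => by
        have := N.smul_mem ((1 : A) ⊗ₜ[F] MulOpposite.op x) hz
        simpa [htmul] using this)
    have hmemI : ∀ x : A, x ∈ I ↔ x ∈ N := fun x => TwoSidedIdeal.mem_mk' _ _ _ _ _ _ x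
    rcases IsSimpleOrder.eq_bot_or_eq_top I with hI | hI
    · left
      ext x
      simp only [Submodule.mem_bot]
      constructor
      · intro hx
        have : x ∈ I := (hmemI x).mpr hx
        rw [hI] at this
        simpa using this
      · rintro rfl; exact N.zero_mem
    · right
      ext x
      simp only [Submodule.mem_top, iff_true]
      have h1 : (1 : A) ∈ N := by
        rw [← hmemI, hI]; trivial
      have := N.smul_mem (x ⊗ₜ[F] (1 : Aᵐᵒᵖ)) h1
      simpa [htmul] using this
  haveI : IsSemisimpleModule (A ⊗[F] Aᵐᵒᵖ) A := inferInstance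
  -- A^(m+1) is semisimple
  haveI hss : IsSemisimpleModule (A ⊗[F] Aᵐᵒᵖ) (Fin (m + 1) → A) := by
    refine isSemisimpleModule_of_isSemisimpleModule_submodule'
      (p := fun i => LinearMap.range (LinearMap.single (A ⊗[F] Aᵐᵒᵖ) (fun _ : Fin (m+1) => A) i))
      (fun i => .range _) ?_
    simp_rw [LinearMap.range_eq_map, Submodule.iSup_map_single, Submodule.pi_top]
  -- the cyclic submodule generated by y
  set W : Submodule (A ⊗[F] Aᵐᵒᵖ) (Fin (m + 1) → A) := Submodule.span _ {y} with hW
  obtain ⟨c, hc⟩ := exists_isCompl W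
  let π : (Fin (m + 1) → A) →ₗ[A ⊗[F] Aᵐᵒᵖ] (Fin (m + 1) → A) :=
    W.subtype ∘ₗ (W.projectionOnto c hc)
  have hπ_mem : ∀ w, π w ∈ W := fun w => Subtype.coe_prop _
  have hπ_id : ∀ w ∈ W, π w = w := by
    intro w hw
    simp only [π, LinearMap.comp_apply]
    rw [Submodule.projectionOnto_apply_left hc ⟨w, hw⟩]
    rfl
  -- the matrix entries of π are scalars
  have hentry : ∀ i j : Fin (m + 1), ∃ cij : F, ∀ x : A,
      π (Pi.single j x) i = cij • x := by
    intro i j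
    let e : A →ₗ[A ⊗[F] Aᵐᵒᵖ] A :=
      (LinearMap.proj i) ∘ₗ π ∘ₗ (LinearMap.single _ (fun _ : Fin (m+1) => A) j)
    have he : ∀ x : A, e x = x * e 1 := by
      intro x
      have : e ((x ⊗ₜ[F] (1 : Aᵐᵒᵖ)) • (1 : A)) = (x ⊗ₜ[F] (1 : Aᵐᵒᵖ)) • e 1 := e.map_smul _ _
      simpa [htmul] using this
    have he' : ∀ x : A, e x = e 1 * x := by
      intro x
      have : e (((1:A) ⊗ₜ[F] MulOpposite.op x) • (1 : A)) = ((1:A) ⊗ₜ[F] MulOpposite.op x) • e 1 :=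
        e.map_smul _ _
      simpa [htmul] using this
    have hcen : e 1 ∈ Set.center A := by
      rw [Semigroup.mem_center_iff]
      intro g
      rw [← he g, he' g]
    obtain ⟨cij, hcij⟩ := hcent hcen
    refine ⟨cij, fun x => ?_⟩
    have : π (Pi.single j x) i = e x := rfl
    rw [this, he, ← hcij, ← Algebra.commutes, ← Algebra.smul_def]
  choose cm hcm using hentry
  -- componentwise formula for π
  have hcomp : ∀ (w : Fin (m + 1) → A) (i : Fin (m + 1)),
      π w i = ∑ j, cm i j • w j := by
    intro w i
    have hw : w = ∑ j, Pi.single j (w j) := (Finset.univ_sum_single w).symm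
    calc π w i = π (∑ j, Pi.single j (w j)) i := by rw [← hw]
    _ = (∑ j, π (Pi.single j (w j))) i := by rw [map_sum]
    _ = ∑ j, π (Pi.single j (w j)) i := by rw [Finset.sum_apply]
    _ = ∑ j, cm i j • w j := by
        exact Finset.sum_congr rfl fun j _ => hcm i j (w j)
  -- the F-linear functional g with g (y p) = δ_{p 0}
  have hyW : ∀ p, y p ∈ Submodule.span F (Set.range y) :=
    fun p => Submodule.subset_span (Set.mem_range_self p)
  let b : Module.Basis (Fin (m + 1)) F (Submodule.span F (Set.range y)) := Module.Basis.span hy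
  obtain ⟨cF, hcF⟩ := exists_isCompl (Submodule.span F (Set.range y))
  let projF : A →ₗ[F] (Submodule.span F (Set.range y)) :=
    Submodule.projectionOnto _ cF hcF
  let g : A →ₗ[F] A :=
    (Algebra.linearMap F A) ∘ₗ (b.coord 0) ∘ₗ projF
  have hg : ∀ p, g (y p) = if p = 0 then 1 else 0 := by
    intro p
    have h1 : projF (y p) = ⟨y p, hyW p⟩ :=
      Submodule.projectionOnto_apply_left hcF ⟨y p, hyW p⟩
    have h2 : (⟨y p, hyW p⟩ : Submodule.span F (Set.range y)) = b p := by
      apply Subtype.ext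
      rw [Module.Basis.span_apply]
    simp only [g, LinearMap.comp_apply, h1, h2, Module.Basis.coord_apply, Module.Basis.repr_self]
    rw [Finsupp.single_apply]
    split
    · next h => simp [h]
    · next h => simp [Ne.symm h]
  -- v is fixed by π, hence lies in W
  set v : Fin (m + 1) → A := fun i => g (y i) with hv
  have hyWmem : y ∈ W := Submodule.mem_span_singleton_self y
  have hπy : π y = y := hπ_id y hyWmem
  have hπv : π v = v := by
    funext i
    rw [hcomp v i]
    have : ∑ j, cm i j • v j = g (∑ j, cm i j • y j) := by
      rw [map_sum]
      exact Finset.sum_congr rfl fun j _ => (g.map_smul _ _).symm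
    rw [this, ← hcomp y i, hπy]
  have hvW : v ∈ W := by
    rw [← hπv]; exact hπ_mem v
  rw [hW, Submodule.mem_span_singleton] at hvW
  obtain ⟨t, ht⟩ := hvW
  obtain ⟨s, hs⟩ := TensorProduct.exists_finset t
  refine ⟨s, fun p => ?_⟩
  have h1 : t • y p = if p = 0 then 1 else 0 := by
    have h2 := congrFun ht p
    rw [Pi.smul_apply] at h2
    rw [h2]
    exact hg p
  rw [hs, Finset.sum_smul] at h1
  rw [← h1]
  exact Finset.sum_congr rfl fun j _ => by rw [htmul]

theorem exists_hPoly_ne_zero [Nontrivial A] [IsSimpleRing A]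
    (hcent : Set.center A ⊆ Set.range (algebraMap F A)) :
    ∀ (m : ℕ) (y : Fin (m + 1) → A), LinearIndependent F y →
      ∃ rs : Fin m → A, hPoly m y rs ≠ 0 := by
  intro m
  induction m with
  | zero =>
    intro y hy
    refine ⟨fun i => i.elim0, ?_⟩
    have h0 : hPoly 0 y (fun i => i.elim0) = y 0 := by
      rw [hPoly]
      rw [Finset.sum_eq_single (1 : Equiv.Perm (Fin 1))]
      · simp
      · intro σ _ hσ
        exact absurd (Subsingleton.elim σ 1) hσ
      · intro h
        exact absurd (Finset.mem_univ _) h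
    rw [h0]
    exact hy.ne_zero 0
  | succ m ih =>
    intro y hy
    by_contra hcon
    push_neg at hcon
    obtain ⟨s, hs⟩ := density hcent hy
    have key : ∀ rs' : Fin m → A, hPoly m (fun j => y j.succ) rs' = 0 := by
      intro rs'
      have h0 : ∀ j : A × Aᵐᵒᵖ, j.1 * hPoly (m + 1) y (Fin.cons j.2.unop rs') = 0 := by
        intro j
        rw [hcon (Fin.cons j.2.unop rs'), mul_zero]
      have h1 : (0 : A) = ∑ j ∈ s, j.1 * hPoly (m + 1) y (Fin.cons j.2.unop rs') := by
        rw [Finset.sum_congr rfl fun j _ => h0 j, Finset.sum_const_zero]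
      rw [Finset.sum_congr rfl (fun j _ => by rw [hPoly_succ, Finset.mul_sum])] at h1
      rw [Finset.sum_comm] at h1
      have h2 : ∀ p : Fin (m + 2),
          ∑ j ∈ s, j.1 * ((if p = 0 then (1 : ℤ) else -1) •
            (y p * ((Fin.cons j.2.unop rs' : Fin (m+1) → A) 0 *
              hPoly m (fun j => y (Equiv.swap 0 p j.succ)) (fun i => (Fin.cons j.2.unop rs' : Fin (m+1) → A) i.succ))))
          = (if p = 0 then (1 : ℤ) else -1) •
            ((∑ j ∈ s, j.1 * (y p * j.2.unop)) *
              hPoly m (fun j => y (Equiv.swap 0 p j.succ)) rs') := by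
        intro p
        have step : ∀ j : A × Aᵐᵒᵖ, j ∈ s →
            j.1 * ((if p = 0 then (1 : ℤ) else -1) •
              (y p * ((Fin.cons j.2.unop rs' : Fin (m+1) → A) 0 *
                hPoly m (fun j => y (Equiv.swap 0 p j.succ)) (fun i => (Fin.cons j.2.unop rs' : Fin (m+1) → A) i.succ))))
            = (if p = 0 then (1 : ℤ) else -1) •
              ((j.1 * (y p * j.2.unop)) * hPoly m (fun j => y (Equiv.swap 0 p j.succ)) rs') := by
          intro j _
          rw [mul_smul_comm]
          congr 1
          rw [Fin.cons_zero]
          have : (fun i : Fin m => (Fin.cons j.2.unop rs' : Fin (m+1) → A) i.succ) = rs' := by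
            funext i; rw [Fin.cons_succ]
          rw [this, mul_assoc, mul_assoc]
        rw [Finset.sum_congr rfl step, ← Finset.smul_sum, ← Finset.sum_mul]
      rw [Finset.sum_congr rfl fun p _ => h2 p] at h1
      rw [Finset.sum_congr rfl fun p _ => by rw [hs p]] at h1
      rw [Finset.sum_eq_single (0 : Fin (m + 2))] at h1
      · simpa [Equiv.swap_self] using h1.symm
      · intro p _ hp
        simp [hp]
      · intro h
        exact absurd (Finset.mem_univ _) h
    obtain ⟨rs', hrs'⟩ := ih (fun j => y j.succ) (hy.comp Fin.succ (Fin.succ_injective _))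
    exact hrs' (key rs')

end Density

theorem matrix_center_sub {F D : Type*} [Field F] [DivisionRing D] [Algebra F D]
    (hcenter : Set.range (algebraMap F D) = Set.center D) {r : ℕ} (hr : 0 < r) :
    Set.center (Matrix (Fin r) (Fin r) D) ⊆
      Set.range (algebraMap F (Matrix (Fin r) (Fin r) D)) := by
  intro M hM
  rw [Semigroup.mem_center_iff] at hM
  haveI : NeZero r := ⟨hr.ne'⟩
  set i0 : Fin r := 0
  -- off-diagonal entries vanish
  have hoff : ∀ i j : Fin r, i ≠ j → M i j = 0 := by
    intro i j hij
    have h := hM (Matrix.single i i 1)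
    have := congrFun (congrFun h i) j
    rw [Matrix.single_mul_apply_same, one_mul] at this
    rw [Matrix.mul_single_apply_of_ne 1 i i i j (Ne.symm hij)] at this
    exact this
  -- diagonal entries are equal
  have hdiag : ∀ i j : Fin r, M i i = M j j := by
    intro i j
    have h := hM (Matrix.single i j 1)
    have := congrFun (congrFun h i) j
    rw [Matrix.single_mul_apply_same, one_mul] at this
    rw [Matrix.mul_single_apply_same, mul_one] at this
    exact this.symm
  -- the common diagonal entry is central in D
  have hcen : M i0 i0 ∈ Set.center D := by
    rw [Semigroup.mem_center_iff]
    intro x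
    have h := hM (Matrix.diagonal (fun _ => x))
    have := congrFun (congrFun h i0) i0
    rw [Matrix.diagonal_mul, Matrix.mul_diagonal] at this
    exact this
  rw [← hcenter] at hcen
  obtain ⟨c, hc⟩ := hcen
  refine ⟨c, ?_⟩
  ext i j
  rw [Matrix.algebraMap_matrix_apply]
  by_cases hij : i = j
  · subst hij
    rw [if_pos rfl, hc, hdiag i0 i]
  · rw [if_neg hij, hoff i j hij]

/-- Let `D` be a division ring with center `F`, let `r, n` be positive integers and let
`a ∈ M_r(D)`. Then `a` is algebraic over `F` of degree at most `n` if and only if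
`g_n(a, r_1, …, r_n) = 0` for all `r_1, …, r_n ∈ M_r(D)`. -/
theorem algebraic_of_degree_le_iff_gPoly_eq_zero
    {F D : Type*} [Field F] [DivisionRing D] [Algebra F D]
    (hcenter : Set.range (algebraMap F D) = Set.center D)
    (r n : ℕ) (hr : 0 < r) (hn : 0 < n)
    (a : Matrix (Fin r) (Fin r) D) :
    (∃ p : Polynomial F, p ≠ 0 ∧ p.natDegree ≤ n ∧ Polynomial.aeval a p = 0) ↔
      ∀ rs : Fin n → Matrix (Fin r) (Fin r) D, gPoly n a rs = 0 := by
  classical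
  haveI : NeZero r := ⟨hr.ne'⟩
  constructor
  · rintro ⟨p, hp0, hdeg, hann⟩ rs
    rw [gPoly_eq_hPoly]
    apply hPoly_eq_zero_of_not_linearIndependent (F := F)
    intro hind
    -- derive p = 0, contradiction
    have hsum : (∑ i ∈ Finset.range (n + 1), p.coeff i • a ^ i) = 0 := by
      rw [← Polynomial.aeval_eq_sum_range' (lt_of_le_of_lt hdeg (Nat.lt_succ_self n)), hann]
    have hfin : (∑ k : Fin (n + 1), p.coeff (k : ℕ) • a ^ (k : ℕ)) = 0 := by
      rw [Fin.sum_univ_eq_sum_range (fun i => p.coeff i • a ^ i) (n + 1)]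
      exact hsum
    have hzero := (Fintype.linearIndependent_iff.mp hind) (fun k => p.coeff (k : ℕ)) hfin
    apply hp0
    ext k
    by_cases hk : k < n + 1
    · simpa using hzero ⟨k, hk⟩
    · rw [Polynomial.coeff_eq_zero_of_natDegree_lt (lt_of_le_of_lt hdeg (by omega))]
      simp
  · intro h
    haveI : Nontrivial (Matrix (Fin r) (Fin r) D) := by
      refine ⟨0, 1, fun h01 => ?_⟩
      have := congrFun (congrFun h01 0) 0
      simp [Matrix.one_apply] at this
    have hind : ¬ LinearIndependent F (fun k : Fin (n + 1) =>
        a ^ (k : ℕ)) := by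
      intro hind
      obtain ⟨rs, hne⟩ := exists_hPoly_ne_zero (matrix_center_sub hcenter hr) n _ hind
      exact hne (by rw [← gPoly_eq_hPoly]; exact h rs)
    obtain ⟨c, hc, i, hi⟩ := Fintype.not_linearIndependent_iff.mp hind
    refine ⟨∑ k : Fin (n + 1), Polynomial.C (c k) * Polynomial.X ^ (k : ℕ), ?_, ?_, ?_⟩
    · -- nonzero
      intro h0
      apply hi
      have hco := congrArg (fun q => Polynomial.coeff q (i : ℕ)) h0
      simp only [Polynomial.finset_sum_coeff, Polynomial.coeff_zero] at hco
      rw [Finset.sum_eq_single i] at hco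
      · simpa [Polynomial.coeff_C_mul, Polynomial.coeff_X_pow] using hco
      · intro k _ hk
        rw [Polynomial.coeff_C_mul, Polynomial.coeff_X_pow, if_neg, mul_zero]
        intro he
        exact hk (Fin.ext he.symm)
      · intro hmem
        exact absurd (Finset.mem_univ _) hmem
    · -- degree bound
      refine Polynomial.natDegree_sum_le_of_forall_le _ _ fun k _ => ?_
      refine le_trans (Polynomial.natDegree_C_mul_le _ _) ?_
      rw [Polynomial.natDegree_X_pow]
      omega
    · -- annihilation
      rw [map_sum]
      have heval : ∀ k : Fin (n + 1),
          (Polynomial.aeval a) (Polynomial.C (c k) * Polynomial.X ^ (k : ℕ))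
          = c k • a ^ (k : ℕ) := by
        intro k
        rw [map_mul, map_pow, Polynomial.aeval_C, Polynomial.aeval_X, ← Algebra.smul_def]
      rw [Finset.sum_congr rfl fun k _ => heval k]
      exact hc
end
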